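/- arXiv:2510.24426 — 7 statements merged into one kernel-verified Lean document; each statement's English description precedes it below -/
import Mathlib

section
/- Let L be a frame, S a complemented sublocale of L, and x ∈ ∂S with x ≠ 1. Then every open sublocale 𝔬(u) containing x meets both S and L∖S. -/
open Order Set

variable {L : Type*} [Order.Frame L]

/-- A sublocale of a frame: closed under arbitrary meets and under Heyting implication
from arbitrary elements. -/
def IsSublocale (S : Set L) : Prop :=
  (∀ M ⊆ S, sInf M ∈ S) ∧ ∀ x : L, ∀ s ∈ S, x ⇨ s ∈ S

/-- The open sublocale associated to `u`. -/
def oSub (u : L) : Set L := {x | u ⇨ x = x}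

/-- The closed sublocale associated to `u`. -/
def cSub (u : L) : Set L := Set.Ici u

/-- Binary join of sublocales. -/
def vee (A B : Set L) : Set L := {x | ∃ M ⊆ A ∪ B, x = sInf M}

/-- Join of a family of sublocales. -/
def iJoin {ι : Type*} (S : ι → Set L) : Set L := {x | ∃ M ⊆ ⋃ i, S i, x = sInf M}

/-- Two sublocales meet if their intersection is not the void sublocale `{⊤}`. -/
def Meets (S T : Set L) : Prop := S ∩ T ≠ ({⊤} : Set L)

/-- The closure of a sublocale. -/
def clo (S : Set L) : Set L := Set.Ici (sInf S)

/-- The index of the interior: the largest `u` with `oSub u ⊆ S`. -/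
def intIdx (S : Set L) : L := sSup {u | oSub u ⊆ S}

/-- The interior of a sublocale: the largest open sublocale contained in it. -/
def intr (S : Set L) : Set L := oSub (intIdx S)

/-- The boundary of a sublocale: closure minus interior
(computed as `clo S ∩ cSub (intIdx S)`, since `cSub (intIdx S)` is the complement of
the interior). -/
def bd (S : Set L) : Set L := clo S ∩ cSub (intIdx S)

/-- The supplement of a sublocale. -/
def suppl (S : Set L) : Set L := ⋂₀ {T | IsSublocale T ∧ vee T S = Set.univ}

/-- A sublocale is complemented if it is disjoint from its supplement. -/
def ComplementedSub (S : Set L) : Prop := S ∩ suppl S = ({⊤} : Set L)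

/-- A sublocale is connected if it admits no separation by two closed sublocales. -/
def SubConnected (S : Set L) : Prop :=
  ∀ a b : L, S ⊆ vee (cSub a) (cSub b) → S ∩ cSub a ∩ cSub b = ({⊤} : Set L) →
    S ∩ cSub a = ({⊤} : Set L) ∨ S ∩ cSub b = ({⊤} : Set L)

/-- Separated sublocales. -/
def SepSub (P Q : Set L) : Prop :=
  clo P ∩ Q = ({⊤} : Set L) ∧ P ∩ clo Q = ({⊤} : Set L)

/-- A connected element of a frame. -/
def ConnElem (v : L) : Prop := ∀ b c : L, v = b ⊔ c → b ⊓ c = ⊥ → b = ⊥ ∨ c = ⊥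

/-- A locally connected frame: every element is a join of connected elements. -/
def LocConn (L : Type*) [Order.Frame L] : Prop :=
  ∀ x : L, ∃ F : Set L, (∀ v ∈ F, ConnElem v) ∧ x = sSup F

/-- A strongly locally connected frame. -/
def StrLocConn (L : Type*) [Order.Frame L] : Prop :=
  ∀ u : L, ∀ x ∈ oSub u, ∃ v : L, SubConnected (oSub v) ∧ oSub v ⊆ oSub u ∧ x ∈ oSub v

/-- A component of a sublocale `T`: a nonvoid connected sublocale, maximal among
connected sublocales of `T`. -/
def IsComponent (D T : Set L) : Prop :=
  IsSublocale D ∧ D ⊆ T ∧ D ≠ ({⊤} : Set L) ∧ SubConnected D ∧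
    ∀ S : Set L, IsSublocale S → S ⊆ T → SubConnected S → Meets S D → S ⊆ D

/-- Normally separated sublocales. -/
def NormSep (S T : Set L) : Prop :=
  ∃ u v : L, oSub u ∩ oSub v = ({⊤} : Set L) ∧ S ⊆ oSub u ∧ T ⊆ oSub v

/-- Normally connected sublocale. -/
def NormConn (C : Set L) : Prop :=
  ∀ S T : Set L, IsSublocale S → IsSublocale T → vee S T = C → NormSep S T →
    S = ({⊤} : Set L) ∨ T = ({⊤} : Set L)

/-- A simple sublocale: complemented with both itself and its supplement connected. -/
def SimpleSub (S : Set L) : Prop :=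
  IsSublocale S ∧ ComplementedSub S ∧ SubConnected S ∧ SubConnected (suppl S)


lemma isSublocale_suppl (S : Set L) : IsSublocale (suppl S) := by
  constructor
  · intro M hM T hT
    exact hT.1.1 M (fun m hm => hM hm T hT)
  · intro x s hs T hT
    exact hT.1.2 x s (hs T hT)

lemma suppl_decomp (S : Set L) (hS : IsSublocale S) (y : L) :
    ∃ p ∈ suppl S, ∃ q ∈ S, y ≤ q ∧ y = p ⊓ q := by
  set q := sInf (S ∩ Set.Ici y) with hqdef
  have hqS : q ∈ S := hS.1 _ Set.inter_subset_left
  have hyq : y ≤ q := le_sInf (fun b hb => hb.2)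
  refine ⟨q ⇨ y, ?_, q, hqS, hyq, ?_⟩
  · intro T hT
    obtain ⟨hTsub, hTvee⟩ := hT
    have hy : y ∈ vee T S := by rw [hTvee]; trivial
    obtain ⟨M, hM, hyM⟩ := hy
    have hsplit : M = (M ∩ T) ∪ (M ∩ S) := by
      ext m
      constructor
      · intro hm
        rcases hM hm with h | h
        · exact Or.inl ⟨hm, h⟩
        · exact Or.inr ⟨hm, h⟩
      · rintro (⟨hm, -⟩ | ⟨hm, -⟩) <;> exact hm
    have hy2 : y = sInf (M ∩ T) ⊓ sInf (M ∩ S) := by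
      rw [← sInf_union, ← hsplit]; exact hyM
    have ha : sInf (M ∩ T) ∈ T := hTsub.1 _ Set.inter_subset_right
    have hbS : sInf (M ∩ S) ∈ S := hS.1 _ Set.inter_subset_right
    have hyb : y ≤ sInf (M ∩ S) := hy2.le.trans inf_le_right
    have hqb : q ≤ sInf (M ∩ S) := sInf_le ⟨hbS, hyb⟩
    have : q ⇨ y = q ⇨ sInf (M ∩ T) := by
      rw [hy2, himp_inf_distrib, himp_eq_top_iff.mpr hqb, inf_top_eq]
    rw [this]
    exact hTsub.2 q _ ha
  · rw [himp_inf_self, inf_eq_left.mpr hyq]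

theorem stmt4 (S : Set L) (hS : IsSublocale S) (hc : ComplementedSub S)
    (x : L) (hx : x ∈ bd S) (hx1 : x ≠ ⊤) :
    ∀ u : L, x ∈ oSub u → Meets (oSub u) S ∧ Meets (oSub u) (suppl S) := by
  intro u hxu
  obtain ⟨hxc, hxi⟩ := hx
  have hux : u ⇨ x = x := hxu
  have hnle : ¬ u ≤ x := by
    intro h
    exact hx1 (by rw [← hux, himp_eq_top_iff.mpr h])
  constructor
  · intro hcon
    have hus : ∀ s ∈ S, u ≤ s := by
      intro s hs
      have h1 : u ⇨ s ∈ oSub u := by simp [oSub, himp_himp]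
      have h2 : u ⇨ s ∈ S := hS.2 u s hs
      have : u ⇨ s ∈ ({⊤} : Set L) := hcon ▸ Set.mem_inter h1 h2
      exact himp_eq_top_iff.mp this
    have h1 : u ≤ sInf S := le_sInf hus
    exact hnle (h1.trans hxc)
  · intro hcon
    have hsub : oSub u ⊆ S := by
      intro t ht
      obtain ⟨p, hp, q, hqS, hyq, hy⟩ := suppl_decomp S hS t
      have hupS : u ⇨ p ∈ suppl S := (isSublocale_suppl S).2 u p hp
      have hupo : u ⇨ p ∈ oSub u := by simp [oSub, himp_himp]
      have htop : u ⇨ p = ⊤ := by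
        have : u ⇨ p ∈ ({⊤} : Set L) := hcon ▸ Set.mem_inter hupo hupS
        exact this
      have ht' : t = u ⇨ q := by
        calc t = u ⇨ t := (ht : u ⇨ t = t).symm
          _ = (u ⇨ p) ⊓ (u ⇨ q) := by rw [hy, himp_inf_distrib]
          _ = u ⇨ q := by rw [htop, top_inf_eq]
      rw [ht']
      exact hS.2 u q hqS
    have huI : u ≤ intIdx S := le_sSup hsub
    exact hnle (huI.trans hxi)
end

section
/- For any sublocales A, B of a frame L, the boundary of A ∩ B is contained in ∂A ∨ ∂B, and the boundary of A ∨ B is contained in ∂A ∨ ∂B. -/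
open Order Set

variable {L : Type*} [Order.Frame L]

lemma sSup_himp' (s : Set L) (b : L) : sSup s ⇨ b = ⨅ a ∈ s, a ⇨ b := by
  apply le_antisymm
  · exact le_iInf₂ fun a ha => himp_le_himp_right (le_sSup ha)
  · rw [le_himp_iff, inf_sSup_eq]
    exact iSup₂_le fun a ha =>
      le_trans (inf_le_inf_right a (iInf₂_le a ha)) himp_inf_le

lemma himp_mem_oSub (u x : L) : u ⇨ x ∈ oSub u := by
  simp only [oSub, Set.mem_setOf_eq, himp_himp, inf_idem]

lemma intr_subset {S : Set L} (hS : IsSublocale S) : intr S ⊆ S := by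
  intro x hx
  have hx' : sSup {u | oSub u ⊆ S} ⇨ x = x := hx
  rw [sSup_himp'] at hx'
  have heq : (⨅ a ∈ {u | oSub u ⊆ S}, a ⇨ x) = sInf ((· ⇨ x) '' {u | oSub u ⊆ S}) := by
    rw [sInf_image]
  rw [heq] at hx'
  rw [← hx']
  apply hS.1
  rintro y ⟨u, hu, rfl⟩
  exact hu (himp_mem_oSub u x)

lemma oSub_inf (u v : L) : oSub (u ⊓ v) = oSub u ∩ oSub v := by
  ext x
  simp only [oSub, Set.mem_setOf_eq, Set.mem_inter_iff]
  constructor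
  · intro h
    constructor
    · exact le_antisymm ((himp_le_himp_right inf_le_left).trans_eq h) le_himp
    · exact le_antisymm ((himp_le_himp_right inf_le_right).trans_eq h) le_himp
  · rintro ⟨h1, h2⟩
    rw [← himp_himp, h2, h1]

lemma mem_vee_bd (A B : Set L) (x : L)
    (h : (sInf A ⊔ intIdx A) ⊓ (sInf B ⊔ intIdx B) ≤ x) : x ∈ vee (bd A) (bd B) := by
  refine ⟨{x ⊔ (sInf A ⊔ intIdx A), x ⊔ (sInf B ⊔ intIdx B)}, ?_, ?_⟩
  · rintro y hy
    rcases hy with rfl | rfl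
    · exact Or.inl ⟨le_sup_left.trans le_sup_right, le_sup_right.trans le_sup_right⟩
    · exact Or.inr ⟨le_sup_left.trans le_sup_right, le_sup_right.trans le_sup_right⟩
  · rw [sInf_pair, ← sup_inf_left, sup_eq_left.mpr h]

theorem stmt6 (A B : Set L) (hA : IsSublocale A) (hB : IsSublocale B) :
    bd (A ∩ B) ⊆ vee (bd A) (bd B) ∧ bd (vee A B) ⊆ vee (bd A) (bd B) := by
  constructor
  · rintro x ⟨h1, h2⟩
    have hsA : sInf A ≤ x := (sInf_le_sInf Set.inter_subset_left).trans h1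
    have hsB : sInf B ≤ x := (sInf_le_sInf Set.inter_subset_right).trans h1
    have hi : intIdx A ⊓ intIdx B ≤ x := by
      refine (le_sSup ?_).trans h2
      show oSub (intIdx A ⊓ intIdx B) ⊆ A ∩ B
      rw [oSub_inf]
      exact Set.inter_subset_inter (intr_subset hA) (intr_subset hB)
    apply mem_vee_bd
    rw [inf_sup_right]
    simp only [inf_sup_left]
    exact sup_le (sup_le (inf_le_left.trans hsA) (inf_le_left.trans hsA))
      (sup_le (inf_le_right.trans hsB) hi)
  · rintro x ⟨h1, h2⟩
    have hs : sInf A ⊓ sInf B ≤ x := by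
      refine (le_sInf ?_).trans h1
      rintro m ⟨M, hM, rfl⟩
      rw [← sInf_union]
      exact sInf_le_sInf hM
    have hi : intIdx A ⊔ intIdx B ≤ intIdx (vee A B) := by
      apply le_sSup
      intro y hy
      have hy' : (intIdx A ⊔ intIdx B) ⇨ y = y := hy
      rw [sup_himp_distrib] at hy'
      refine ⟨{intIdx A ⇨ y, intIdx B ⇨ y}, ?_, ?_⟩
      · rintro z hz
        rcases hz with rfl | rfl
        · exact Or.inl (intr_subset hA (himp_mem_oSub _ _))
        · exact Or.inr (intr_subset hB (himp_mem_oSub _ _))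
      · rw [sInf_pair]; exact hy'.symm
    have hiA : intIdx A ≤ x := le_sup_left.trans (hi.trans h2)
    have hiB : intIdx B ≤ x := le_sup_right.trans (hi.trans h2)
    apply mem_vee_bd
    rw [inf_sup_right]
    simp only [inf_sup_left]
    exact sup_le (sup_le hs (inf_le_right.trans hiB))
      (sup_le (inf_le_left.trans hiA) (inf_le_left.trans hiA))
end

section
/- Let L be a connected frame and C ⊆ L a connected complemented sublocale. If L∖C = P ∨ Q with P and Q separated sublocales, then both C ∨ P and C ∨ Q are connected. -/
open Order Set

variable {L : Type*} [Order.Frame L]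

section AuxProofs

variable {L : Type*} [Order.Frame L]

lemma top_mem_of_sublocale {S : Set L} (hS : IsSublocale S) : (⊤ : L) ∈ S := by
  have := hS.1 ∅ (Set.empty_subset S)
  simpa using this

lemma mem_vee_of {A B : Set L} {x y : L} (hx : x ∈ A) (hy : y ∈ B) : x ⊓ y ∈ vee A B := by
  refine ⟨{x, y}, ?_, sInf_pair.symm⟩
  intro z hz
  rcases hz with rfl | rfl
  · exact Or.inl hx
  · exact Or.inr hy

lemma vee_rep {A B : Set L} (hA : IsSublocale A) (hB : IsSublocale B) {x : L}
    (hx : x ∈ vee A B) : ∃ a ∈ A, ∃ b ∈ B, x = a ⊓ b := by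
  obtain ⟨M, hM, rfl⟩ := hx
  refine ⟨sInf (M ∩ A), hA.1 _ Set.inter_subset_right,
    sInf (M ∩ B), hB.1 _ Set.inter_subset_right, ?_⟩
  have hMeq : M = M ∩ A ∪ M ∩ B := by
    rw [← Set.inter_union_distrib_left, Set.inter_eq_left.mpr hM]
  conv_lhs => rw [hMeq]
  rw [sInf_union]

lemma vee_comm (A B : Set L) : vee A B = vee B A := by
  unfold vee
  rw [Set.union_comm]

lemma sInf_mem_vee {A B : Set L} {M : Set L} (hM : M ⊆ vee A B) : sInf M ∈ vee A B := by
  have hch : ∀ m : L, ∀ _ : m ∈ M, ∃ N : Set L, N ⊆ A ∪ B ∧ m = sInf N := fun m hm => hM hm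
  choose N hN1 hN2 using hch
  refine ⟨⋃ (m : L) (hm : m ∈ M), N m hm, ?_, ?_⟩
  · intro u hu
    simp only [Set.mem_iUnion] at hu
    obtain ⟨m, hm, hu⟩ := hu
    exact hN1 m hm hu
  · apply le_antisymm
    · apply le_sInf
      intro u hu
      simp only [Set.mem_iUnion] at hu
      obtain ⟨m, hm, hu⟩ := hu
      have h1 : sInf M ≤ m := sInf_le hm
      rw [hN2 m hm] at h1
      exact h1.trans (sInf_le hu)
    · apply le_sInf
      intro m hm
      rw [hN2 m hm]
      apply le_sInf
      intro u hu
      apply sInf_le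
      simp only [Set.mem_iUnion]
      exact ⟨m, hm, hu⟩

lemma sublocale_vee {A B : Set L} (hA : IsSublocale A) (hB : IsSublocale B) :
    IsSublocale (vee A B) := by
  constructor
  · exact fun M hM => sInf_mem_vee hM
  · intro x s hs
    obtain ⟨a, ha, b, hb, rfl⟩ := vee_rep hA hB hs
    rw [himp_inf_distrib]
    exact mem_vee_of (hA.2 x a ha) (hB.2 x b hb)

lemma distrib_split {S : Set L} (hS : IsSublocale S) {x a b : L} (hx : x ∈ S)
    (hab : a ⊓ b ≤ x) : ∃ α ∈ S, a ≤ α ∧ ∃ β ∈ S, b ≤ β ∧ x = α ⊓ β := by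
  have hαS : sInf (S ∩ Set.Ici (a ⊔ x)) ∈ S := hS.1 _ Set.inter_subset_left
  set α := sInf (S ∩ Set.Ici (a ⊔ x)) with hαdef
  have haα : a ⊔ x ≤ α := le_sInf fun m hm => hm.2
  have hxα : x ≤ α := le_sup_right.trans haα
  have hkey : α ≤ b ⇨ x := by
    apply sInf_le
    refine ⟨hS.2 b x hx, ?_⟩
    exact sup_le (le_himp_iff.2 hab) (le_himp_iff.2 inf_le_left)
  refine ⟨α, hαS, le_sup_left.trans haα, α ⇨ x, hS.2 α x hx, ?_, ?_⟩
  · rw [le_himp_iff, inf_comm]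
    exact le_himp_iff.1 hkey
  · rw [inf_himp, inf_eq_right.mpr hxα]

lemma cover_suppl {C : Set L} (hC : IsSublocale C) (z : L) :
    ∃ c ∈ C, ∃ d ∈ suppl C, z = c ⊓ d := by
  have hcC : sInf (C ∩ Set.Ici z) ∈ C := hC.1 _ Set.inter_subset_left
  set c := sInf (C ∩ Set.Ici z) with hcdef
  have hzc : z ≤ c := le_sInf fun m hm => hm.2
  refine ⟨c, hcC, c ⇨ z, ?_, by rw [inf_himp, inf_eq_right.mpr hzc]⟩
  refine Set.mem_sInter.mpr ?_
  rintro T ⟨hTs, hTC⟩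
  have hz : z ∈ vee T C := by rw [hTC]; trivial
  obtain ⟨t, ht, c', hc', hzeq⟩ := vee_rep hTs hC hz
  have hzc' : z ≤ c' := hzeq.le.trans inf_le_right
  have hcc' : c ≤ c' := sInf_le ⟨hc', hzc'⟩
  have heq : c ⇨ z = c ⇨ t := by
    rw [hzeq, himp_inf_distrib, himp_eq_top_iff.mpr hcc', inf_top_eq]
  rw [heq]
  exact hTs.2 c t ht

lemma le_of_mem_cvee {a b x : L} (hx : x ∈ vee (cSub a) (cSub b)) : a ⊓ b ≤ x := by
  obtain ⟨M, hM, rfl⟩ := hx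
  refine le_sInf fun m hm => ?_
  rcases hM hm with h | h
  · exact inf_le_left.trans h
  · exact inf_le_right.trans h

lemma master_sep (hL : ConnElem (⊤ : L)) {X Y : Set L}
    (hcov : ∀ z : L, ∃ x ∈ X, ∃ y ∈ Y, z = x ⊓ y)
    (hXY : ∀ y ∈ Y, sInf X ≤ y → y = ⊤)
    (hYX : ∀ x ∈ X, sInf Y ≤ x → x = ⊤) :
    (∀ x ∈ X, x = ⊤) ∨ (∀ y ∈ Y, y = ⊤) := by
  have hbot : sInf X ⊓ sInf Y = ⊥ := by
    obtain ⟨x, hx, y, hy, hxy⟩ := hcov ⊥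
    have h1 : sInf X ⊓ sInf Y ≤ ⊥ := by
      rw [hxy]
      exact inf_le_inf (sInf_le hx) (sInf_le hy)
    exact le_bot_iff.mp h1
  have htop : sInf X ⊔ sInf Y = ⊤ := by
    obtain ⟨x, hx, y, hy, hxy⟩ := hcov (sInf X ⊔ sInf Y)
    have hxt : x = ⊤ := hYX x hx (le_sup_right.trans (hxy.le.trans inf_le_left))
    have hyt : y = ⊤ := hXY y hy (le_sup_left.trans (hxy.le.trans inf_le_right))
    rw [hxy, hxt, hyt, inf_top_eq]
  rcases hL (sInf X) (sInf Y) htop.symm hbot with h0 | h0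
  · right
    intro y hy
    exact hXY y hy (h0 ▸ bot_le)
  · left
    intro x hx
    exact hYX x hx (h0 ▸ bot_le)

lemma key_step (hL : ConnElem (⊤ : L)) {C P Q : Set L} (hC : IsSublocale C)
    (hP : IsSublocale P) (hQ : IsSublocale Q)
    (h : suppl C = vee P Q) (hsepPQ : clo P ∩ Q = ({⊤} : Set L))
    (hsepQP : P ∩ clo Q = ({⊤} : Set L))
    {a b : L} (h1 : vee C P ⊆ vee (cSub a) (cSub b))
    (h2 : vee C P ∩ cSub a ∩ cSub b = ({⊤} : Set L))
    (hcase : C ∩ cSub b = ({⊤} : Set L)) :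
    vee C P ∩ cSub a = ({⊤} : Set L) ∨ vee C P ∩ cSub b = ({⊤} : Set L) := by
  have hCP : IsSublocale (vee C P) := sublocale_vee hC hP
  have htopC : (⊤ : L) ∈ C := top_mem_of_sublocale hC
  have htopQ : (⊤ : L) ∈ Q := top_mem_of_sublocale hQ
  have h2' : ∀ w : L, w ∈ vee C P → a ≤ w → b ≤ w → w = ⊤ := by
    intro w hw haw hbw
    have hm : w ∈ vee C P ∩ cSub a ∩ cSub b := ⟨⟨hw, haw⟩, hbw⟩
    rw [h2] at hm
    exact hm
  have hcase' : ∀ c ∈ C, b ≤ c → c = ⊤ := by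
    intro c hc hbc
    have hm : c ∈ C ∩ cSub b := ⟨hc, hbc⟩
    rw [hcase] at hm
    exact hm
  -- the two pieces
  have hYsub : ∀ y, y ∈ vee C P → b ≤ y → y ∈ P ∩ Set.Ici b := by
    intro y hy hby
    obtain ⟨c, hc, p, hp, rfl⟩ := vee_rep hC hP hy
    have hctop : c = ⊤ := hcase' c hc (hby.trans inf_le_left)
    exact ⟨by rw [hctop, top_inf_eq]; exact hp, hby⟩
  have hw0a : a ≤ sInf (vee C P ∩ Set.Ici a) := le_sInf fun m hm => hm.2
  have hy0b : b ≤ sInf (P ∩ Set.Ici b) := le_sInf fun m hm => hm.2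
  have hXY : ∀ y ∈ (P ∩ Set.Ici b),
      sInf {x | ∃ w ∈ vee C P, a ≤ w ∧ ∃ q ∈ Q, x = w ⊓ q} ≤ y → y = ⊤ := by
    rintro y ⟨hyP, hby⟩ hXy
    have hlow : sInf (vee C P ∩ Set.Ici a) ⊓ sInf Q ≤ y := by
      refine (le_sInf ?_).trans hXy
      rintro x ⟨w, hw, haw, q, hq, rfl⟩
      exact inf_le_inf (sInf_le ⟨hw, haw⟩) (sInf_le hq)
    obtain ⟨ρ, hρ, hwρ, σ, hσ, hqσ, rfl⟩ := distrib_split hP hyP hlow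
    have hσtop : σ = ⊤ := by
      have hm : σ ∈ P ∩ clo Q := ⟨hσ, hqσ⟩
      rw [hsepQP] at hm
      exact hm
    have hρa : a ≤ ρ := hw0a.trans hwρ
    have hρb : b ≤ ρ := hby.trans inf_le_left
    have hρCP : ρ ∈ vee C P := by
      have := mem_vee_of htopC hρ
      rwa [top_inf_eq] at this
    rw [h2' ρ hρCP hρa hρb, hσtop, top_inf_eq]
  have hYX : ∀ x ∈ {x | ∃ w ∈ vee C P, a ≤ w ∧ ∃ q ∈ Q, x = w ⊓ q},
      sInf (P ∩ Set.Ici b) ≤ x → x = ⊤ := by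
    rintro x ⟨w, hw, haw, q, hq, rfl⟩ hYx
    have hqtop : q = ⊤ := by
      have hPy : sInf P ≤ sInf (P ∩ Set.Ici b) := sInf_le_sInf Set.inter_subset_left
      have hm : q ∈ clo P ∩ Q := ⟨hPy.trans (hYx.trans inf_le_right), hq⟩
      rw [hsepPQ] at hm
      exact hm
    have hwtop : w = ⊤ := h2' w hw haw (hy0b.trans (hYx.trans inf_le_left))
    rw [hqtop, hwtop, top_inf_eq]
  have hcov : ∀ z : L, ∃ x ∈ {x | ∃ w ∈ vee C P, a ≤ w ∧ ∃ q ∈ Q, x = w ⊓ q},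
      ∃ y ∈ (P ∩ Set.Ici b), z = x ⊓ y := by
    intro z
    obtain ⟨c, hc, d, hd, hz⟩ := cover_suppl hC z
    rw [h] at hd
    obtain ⟨p, hp, q, hq, hdq⟩ := vee_rep hP hQ hd
    have hwCP : c ⊓ p ∈ vee C P := mem_vee_of hc hp
    have hab : a ⊓ b ≤ c ⊓ p := le_of_mem_cvee (h1 hwCP)
    obtain ⟨α, hα, haα, β, hβ, hbβ, hcp⟩ := distrib_split hCP hwCP hab
    refine ⟨α ⊓ q, ⟨α, hα, haα, q, hq, rfl⟩, β, hYsub β hβ hbβ, ?_⟩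
    rw [hz, hdq, ← inf_assoc, hcp, inf_right_comm]
  rcases master_sep hL hcov hXY hYX with hx | hy
  · left
    apply Set.eq_singleton_iff_unique_mem.mpr
    refine ⟨⟨top_mem_of_sublocale hCP, le_top⟩, ?_⟩
    rintro u ⟨huCP, hau⟩
    exact hx u ⟨u, huCP, hau, ⊤, htopQ, (inf_top_eq u).symm⟩
  · right
    apply Set.eq_singleton_iff_unique_mem.mpr
    refine ⟨⟨top_mem_of_sublocale hCP, le_top⟩, ?_⟩
    rintro u ⟨huCP, hbu⟩
    exact hy u (hYsub u huCP hbu)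

lemma main_conn (hL : ConnElem (⊤ : L)) {C : Set L} (hC : IsSublocale C)
    (hCc : SubConnected C) (P' Q' : Set L) (hP' : IsSublocale P') (hQ' : IsSublocale Q')
    (h' : suppl C = vee P' Q') (hs1 : clo P' ∩ Q' = ({⊤} : Set L))
    (hs2 : P' ∩ clo Q' = ({⊤} : Set L)) : SubConnected (vee C P') := by
  intro a b h1 h2
  have hCsub : C ⊆ vee C P' := by
    intro c hc
    have := mem_vee_of hc (top_mem_of_sublocale hP')
    rwa [inf_top_eq] at this
  have hCc1 : C ⊆ vee (cSub a) (cSub b) := fun c hc => h1 (hCsub hc)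
  have hCc2 : C ∩ cSub a ∩ cSub b = ({⊤} : Set L) := by
    apply Set.eq_singleton_iff_unique_mem.mpr
    refine ⟨⟨⟨top_mem_of_sublocale hC, le_top⟩, le_top⟩, ?_⟩
    rintro u ⟨⟨hu, hau⟩, hbu⟩
    have hm : u ∈ vee C P' ∩ cSub a ∩ cSub b := ⟨⟨hCsub hu, hau⟩, hbu⟩
    rw [h2] at hm
    exact hm
  rcases hCc a b hCc1 hCc2 with hca | hcb
  · have h1' : vee C P' ⊆ vee (cSub b) (cSub a) := by rw [vee_comm (cSub b) (cSub a)]; exact h1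
    have h2' : vee C P' ∩ cSub b ∩ cSub a = ({⊤} : Set L) := by
      rw [Set.inter_right_comm]; exact h2
    exact (key_step hL hC hP' hQ' h' hs1 hs2 h1' h2' hca).symm
  · exact key_step hL hC hP' hQ' h' hs1 hs2 h1 h2 hcb

end AuxProofs


theorem stmt8 (hL : ConnElem (⊤ : L)) (C : Set L) (hC : IsSublocale C)
    (hCc : SubConnected C) (hcomp : ComplementedSub C)
    (P Q : Set L) (hP : IsSublocale P) (hQ : IsSublocale Q)
    (h : suppl C = vee P Q) (hsep : SepSub P Q) :
    SubConnected (vee C P) ∧ SubConnected (vee C Q) := by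
  constructor
  · exact main_conn hL hC hCc P Q hP hQ h hsep.1 hsep.2
  · refine main_conn hL hC hCc Q P hQ hP ?_ ?_ ?_
    · rw [h, vee_comm]
    · exact (Set.inter_comm _ _).trans hsep.2
    · exact (Set.inter_comm _ _).trans hsep.1
end

section
/- Let {S_i}_{i∈I} be a family of sublocales of a frame L whose join exists as a sublocale. (a) If D is a complemented nonvoid sublocale of ⋁S_i, then D meets some S_{i₀}. (b) If each S_i is open, then any sublocale D meeting ⋁S_i meets some S_{i₀}. -/
open Order Set

variable {L : Type*} [Order.Frame L]

theorem stmt11 {ι : Type*} (S : ι → Set L) (hS : ∀ i, IsSublocale (S i))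
    (hJ : IsSublocale (iJoin S)) :
    (∀ D : Set L, IsSublocale D → D ⊆ iJoin S → D ≠ ({⊤} : Set L) →
      (∃ T : Set L, IsSublocale T ∧ T ⊆ iJoin S ∧ vee T D = iJoin S ∧
        T ∩ D = ({⊤} : Set L)) →
      ∃ i, Meets D (S i)) ∧
    ((∀ i, ∃ u : L, S i = oSub u) →
      ∀ D : Set L, IsSublocale D → Meets D (iJoin S) → ∃ i, Meets D (S i)) := by
  have htopJ : (⊤ : L) ∈ iJoin S := ⟨∅, Set.empty_subset _, by simp⟩
  constructor
  · rintro D hD hDsub hDne ⟨T, hT, hTsub, hveeTD, hTD⟩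
    by_contra hcon
    push_neg at hcon
    simp only [Meets, ne_eq, not_not] at hcon
    have hST : ∀ i, S i ⊆ T := by
      intro i s hs
      have hsJ : s ∈ vee T D := by
        rw [hveeTD]
        exact ⟨{s}, Set.singleton_subset_iff.mpr (Set.mem_iUnion_of_mem i hs), by simp⟩
      obtain ⟨M, hM, rfl⟩ := hsJ
      set t := sInf (M ∩ T) with ht
      set d := sInf (M ∩ D) with hd
      have htT : t ∈ T := hT.1 _ Set.inter_subset_right
      have hdD : d ∈ D := hD.1 _ Set.inter_subset_right
      have hs_eq : sInf M = t ⊓ d := by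
        rw [ht, hd, ← sInf_union, ← Set.inter_union_distrib_left,
          Set.inter_eq_left.mpr hM]
      have h1 : t ⇨ sInf M ∈ S i := (hS i).2 t _ hs
      have h2 : t ⇨ sInf M ∈ D := by
        have he : t ⇨ sInf M = t ⇨ d := by
          rw [hs_eq, himp_inf_distrib, himp_self, top_inf_eq]
        rw [he]; exact hD.2 t d hdD
      have htop : t ⇨ sInf M = ⊤ := by
        have hmem : t ⇨ sInf M ∈ D ∩ S i := ⟨h2, h1⟩
        rw [hcon i] at hmem
        simpa using hmem
      have hts : t ≤ sInf M := himp_eq_top_iff.mp htop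
      have : sInf M = t := le_antisymm (hs_eq ▸ inf_le_left) hts
      rw [this]; exact htT
    have hJT : iJoin S ⊆ T := by
      rintro x ⟨M, hM, rfl⟩
      exact hT.1 M (hM.trans (Set.iUnion_subset hST))
    apply hDne
    apply Set.Subset.antisymm
    · intro x hx
      have hx' : x ∈ T ∩ D := ⟨hJT (hDsub hx), hx⟩
      rw [hTD] at hx'; exact hx'
    · intro x hx
      rw [Set.mem_singleton_iff] at hx; subst hx
      simpa using hD.1 ∅ (Set.empty_subset _)
  · rintro hopen D hD hM
    by_contra hcon
    push_neg at hcon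
    simp only [Meets, ne_eq, not_not] at hcon
    apply hM
    apply Set.Subset.antisymm
    · rintro x ⟨hxD, M, hMsub, rfl⟩
      have hMtop : ∀ m ∈ M, m = (⊤ : L) := by
        intro m hm
        obtain ⟨i, hmi⟩ : ∃ i, m ∈ S i := by simpa using hMsub hm
        obtain ⟨u, hu⟩ := hopen i
        have h1 : u ⇨ sInf M ∈ D := hD.2 u _ hxD
        have h2 : u ⇨ sInf M ∈ S i := by
          rw [hu]
          show u ⇨ (u ⇨ sInf M) = u ⇨ sInf M
          rw [himp_himp, inf_idem]
        have htop : u ⇨ sInf M = ⊤ := by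
          have hm' : u ⇨ sInf M ∈ D ∩ S i := ⟨h1, h2⟩
          rw [hcon i] at hm'; simpa using hm'
        have hum : u ≤ m := (himp_eq_top_iff.mp htop).trans (sInf_le hm)
        rw [hu] at hmi
        simp only [oSub, Set.mem_setOf_eq] at hmi
        rw [← hmi, himp_eq_top_iff.mpr hum]
      have : sInf M = ⊤ :=
        le_antisymm le_top (le_sInf fun b hb => (hMtop b hb) ▸ le_rfl)
      simp [this]
    · intro x hx
      rw [Set.mem_singleton_iff] at hx; subst hx
      exact ⟨by simpa using hD.1 ∅ (Set.empty_subset _), htopJ⟩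
end

section
/- Let L be a connected locally connected frame, and let 𝔬(v) be a component of an open sublocale 𝔬(u) with closure(𝔬(v)) ≠ L. Then L∖∂𝔬(v) = 𝔬(v* ∨ v) is not connected, and 𝔬(v* ∨ v) = 𝔬(v*) ∨ 𝔬(v) = (L∖closure(𝔬(v))) ∨ 𝔬(v) exhibits a separation. -/
open Order Set

variable {L : Type*} [Order.Frame L]

lemma aux_himp_compl (a : L) : a ⇨ aᶜ = aᶜ := by
  rw [← himp_bot, himp_himp, inf_idem]

lemma aux_top_mem_oSub (w : L) : (⊤ : L) ∈ oSub w := by simp [oSub]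

lemma aux_himp_mem_oSub (w x : L) : w ⇨ x ∈ oSub w := by
  simp [oSub, himp_himp]

lemma aux_compl_mem_oSub (w : L) : wᶜ ∈ oSub w := by
  simpa [himp_bot] using aux_himp_mem_oSub w (⊥ : L)

lemma aux_sInf_oSub (w : L) : sInf (oSub w) = wᶜ := by
  apply le_antisymm (sInf_le (aux_compl_mem_oSub w))
  refine le_sInf fun x hx => ?_
  rw [← hx, ← himp_bot]
  exact himp_le_himp_left bot_le

lemma aux_oSub_eq_top_iff (w : L) : oSub w = ({⊤} : Set L) ↔ w = ⊥ := by
  constructor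
  · intro h
    have h1 : w ⇨ ⊥ ∈ oSub w := aux_himp_mem_oSub w ⊥
    rw [h] at h1
    have : w ⇨ ⊥ = ⊤ := h1
    simpa [le_bot_iff] using (himp_eq_top_iff.mp this)
  · intro h
    subst h
    ext x
    simp [oSub, eq_comm]

lemma aux_sInf_mem_oSub (w : L) (M : Set L) (hM : M ⊆ oSub w) : sInf M ∈ oSub w := by
  apply le_antisymm
  · refine (le_sInf fun m hm => ?_)
    have : w ⇨ sInf M ≤ w ⇨ m := himp_le_himp_left (sInf_le hm)
    rwa [hM hm] at this
  · exact le_himp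

theorem stmt15 (hc : ConnElem (⊤ : L)) (hlc : LocConn L) (u v : L)
    (hcomp : IsComponent (oSub v) (oSub u)) (hne : clo (oSub v) ≠ (Set.univ : Set L)) :
    ¬ SubConnected (oSub (vᶜ ⊔ v)) ∧
    oSub (vᶜ ⊔ v) = vee (oSub vᶜ) (oSub v) ∧
    SepSub (oSub vᶜ) (oSub v) ∧
    oSub vᶜ ≠ ({⊤} : Set L) ∧ oSub v ≠ ({⊤} : Set L) := by
  have hvne : oSub v ≠ ({⊤} : Set L) := hcomp.2.2.1
  have hvbot : v ≠ ⊥ := fun h => hvne ((aux_oSub_eq_top_iff v).mpr h)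
  have hvc_bot : vᶜ ≠ ⊥ := by
    intro h
    apply hne
    rw [clo, aux_sInf_oSub, h]
    exact Set.Ici_bot
  have hvcne : oSub vᶜ ≠ ({⊤} : Set L) := fun h => hvc_bot ((aux_oSub_eq_top_iff vᶜ).mp h)
  have hvc_top : vᶜ ≠ ⊤ := by
    intro h
    apply hvbot
    have : v ≤ ⊥ := himp_eq_top_iff.mp (by rwa [himp_bot] : v ⇨ ⊥ = ⊤)
    exact le_bot_iff.mp this
  have hvcc_top : vᶜᶜ ≠ ⊤ := by
    intro h
    apply hvc_bot
    have : vᶜ ≤ ⊥ := himp_eq_top_iff.mp (by rwa [himp_bot] : vᶜ ⇨ ⊥ = ⊤)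
    exact le_bot_iff.mp this
  -- part 2: the join decomposition
  have hjoin : oSub (vᶜ ⊔ v) = vee (oSub vᶜ) (oSub v) := by
    ext x
    constructor
    · intro hx
      refine ⟨{vᶜ ⇨ x, v ⇨ x}, ?_, ?_⟩
      · rintro y (rfl | rfl)
        · exact Or.inl (aux_himp_mem_oSub _ _)
        · exact Or.inr (aux_himp_mem_oSub _ _)
      · have : (vᶜ ⊔ v) ⇨ x = x := hx
        rw [sup_himp_distrib] at this
        simp [sInf_pair, this]
    · rintro ⟨M, hM, rfl⟩
      apply aux_sInf_mem_oSub
      intro m hm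
      rcases hM hm with h | h
      · show (vᶜ ⊔ v) ⇨ m = m
        rw [sup_himp_distrib]
        have h1 : vᶜ ⇨ m = m := h
        rw [h1]
        exact inf_eq_left.mpr le_himp
      · show (vᶜ ⊔ v) ⇨ m = m
        rw [sup_himp_distrib]
        have h1 : v ⇨ m = m := h
        rw [h1]
        exact inf_eq_right.mpr le_himp
  -- separation
  have hsep : SepSub (oSub vᶜ) (oSub v) := by
    constructor
    · ext x
      simp only [clo, aux_sInf_oSub, Set.mem_inter_iff, Set.mem_Ici, Set.mem_singleton_iff]
      constructor
      · rintro ⟨h1, h2⟩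
        have hv : v ≤ x := le_trans le_compl_compl h1
        have : v ⇨ x = ⊤ := himp_eq_top_iff.mpr hv
        have h2' : v ⇨ x = x := h2
        rw [this] at h2'; exact h2'.symm
      · rintro rfl
        exact ⟨le_top, aux_top_mem_oSub v⟩
    · ext x
      simp only [clo, aux_sInf_oSub, Set.mem_inter_iff, Set.mem_Ici, Set.mem_singleton_iff]
      constructor
      · rintro ⟨h1, h2⟩
        have : vᶜ ⇨ x = ⊤ := himp_eq_top_iff.mpr h2
        have h1' : vᶜ ⇨ x = x := h1
        rw [this] at h1'; exact h1'.symm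
      · rintro rfl
        exact ⟨aux_top_mem_oSub vᶜ, le_top⟩
  refine ⟨?_, hjoin, hsep, hvcne, hvne⟩
  -- not connected
  intro hconn
  have hsub : oSub (vᶜ ⊔ v) ⊆ vee (cSub vᶜᶜ) (cSub vᶜ) := by
    rw [hjoin]
    rintro x ⟨M, hM, rfl⟩
    refine ⟨M, ?_, rfl⟩
    intro m hm
    rcases hM hm with h | h
    · left
      show vᶜᶜ ≤ m
      have h1 : vᶜ ⇨ m = m := h
      rw [← h1, ← himp_bot]
      exact himp_le_himp_left bot_le
    · right
      show vᶜ ≤ m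
      have h1 : v ⇨ m = m := h
      rw [← h1, ← himp_bot]
      exact himp_le_himp_left bot_le
  have hdisj : oSub (vᶜ ⊔ v) ∩ cSub vᶜᶜ ∩ cSub vᶜ = ({⊤} : Set L) := by
    ext x
    simp only [Set.mem_inter_iff, cSub, Set.mem_Ici, Set.mem_singleton_iff]
    constructor
    · rintro ⟨⟨hx, h1⟩, h2⟩
      have hv : v ≤ x := le_trans le_compl_compl h1
      have e1 : v ⇨ x = ⊤ := himp_eq_top_iff.mpr hv
      have e2 : vᶜ ⇨ x = ⊤ := himp_eq_top_iff.mpr h2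
      have hx' : (vᶜ ⊔ v) ⇨ x = x := hx
      rw [sup_himp_distrib, e1, e2] at hx'
      simpa using hx'.symm
    · rintro rfl
      exact ⟨⟨aux_top_mem_oSub _, le_top⟩, le_top⟩
  rcases hconn vᶜᶜ vᶜ hsub hdisj with h | h
  · -- vᶜᶜ is in the intersection and vᶜᶜ ≠ ⊤
    apply hvcc_top
    have hmem : vᶜᶜ ∈ oSub (vᶜ ⊔ v) ∩ cSub vᶜᶜ := by
      constructor
      · show (vᶜ ⊔ v) ⇨ vᶜᶜ = vᶜᶜ
        rw [sup_himp_distrib]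
        have e1 : vᶜ ⇨ vᶜᶜ = vᶜᶜ := aux_himp_compl vᶜ
        have e2 : v ⇨ vᶜᶜ = ⊤ := himp_eq_top_iff.mpr le_compl_compl
        rw [e1, e2, inf_top_eq]
      · exact le_rfl
    rw [h] at hmem
    exact hmem
  · apply hvc_top
    have hmem : vᶜ ∈ oSub (vᶜ ⊔ v) ∩ cSub vᶜ := by
      constructor
      · show (vᶜ ⊔ v) ⇨ vᶜ = vᶜ
        rw [sup_himp_distrib, himp_self]
        have e1 : v ⇨ vᶜ = vᶜ := aux_himp_compl v
        rw [e1, top_inf_eq]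
      · exact le_rfl
    rw [h] at hmem
    exact hmem
end

section
/- Let L be a connected and locally connected frame, and let A = 𝔠(x), B = 𝔠(y) be nonvoid disjoint closed sublocales. Let N be a connected sublocale meeting both A and B. Then there exists a component D of L∖(A ∨ B) such that N meets D, closure(D) meets A, and closure(D) meets B. -/
open Order Set

variable {L : Type*} [Order.Frame L]

section AuxStmt16

lemma top_mem_of_isSublocale {S : Set L} (hS : IsSublocale S) : ⊤ ∈ S := by
  have h := hS.1 ∅ (by simp)
  simpa using h

lemma exists_ne_top_of_ne {S : Set L} (htop : ⊤ ∈ S) (h : S ≠ ({⊤} : Set L)) :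
    ∃ s ∈ S, s ≠ ⊤ := by
  by_contra hc
  push_neg at hc
  exact h (Set.Subset.antisymm (fun s hs => hc s hs) (by simpa using htop))

lemma mem_oSub_iff {u z : L} : z ∈ oSub u ↔ u ⇨ z = z := Iff.rfl

lemma top_mem_oSub {u : L} : ⊤ ∈ oSub u := himp_top

lemma oSub_isSublocale (u : L) : IsSublocale (oSub u) := by
  constructor
  · intro M hM
    refine le_antisymm (le_sInf fun m hm => ?_) (le_himp_iff.2 inf_le_left)
    calc u ⇨ sInf M ≤ u ⇨ m := himp_le_himp_left (sInf_le hm)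
      _ = m := hM hm
  · intro z s hs
    show u ⇨ (z ⇨ s) = z ⇨ s
    rw [himp_himp, inf_comm, ← himp_himp, hs]

lemma oSub_mono {w u : L} (h : w ≤ u) : oSub w ⊆ oSub u := fun z hz =>
  le_antisymm (le_trans (himp_le_himp_right h) (le_of_eq hz)) le_himp

lemma compl_le_of_mem_oSub {w z : L} (hz : z ∈ oSub w) : w ⇨ ⊥ ≤ z := by
  calc w ⇨ ⊥ ≤ w ⇨ z := himp_le_himp_left bot_le
    _ = z := hz

lemma compl_mem_oSub (w : L) : w ⇨ ⊥ ∈ oSub w := by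
  show w ⇨ (w ⇨ ⊥) = w ⇨ ⊥
  rw [himp_himp, inf_idem]

lemma sInf_oSub (w : L) : sInf (oSub w) = w ⇨ ⊥ :=
  le_antisymm (sInf_le (compl_mem_oSub w)) (le_sInf fun _ hz => compl_le_of_mem_oSub hz)

lemma clo_oSub (w : L) : clo (oSub w) = Set.Ici (w ⇨ ⊥) := by
  rw [clo, sInf_oSub]

lemma le_of_miss_oSub {N : Set L} (hN : IsSublocale N) {v : L}
    (h : N ∩ oSub v = ({⊤} : Set L)) : ∀ s ∈ N, v ≤ s := by
  intro s hs
  have hmem : v ⇨ s ∈ N ∩ oSub v := by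
    refine ⟨hN.2 v s hs, ?_⟩
    show v ⇨ (v ⇨ s) = v ⇨ s
    rw [himp_himp, inf_idem]
  rw [h] at hmem
  exact himp_eq_top_iff.1 hmem

lemma mem_vee_cSub {a b s : L} (h : a ⊓ b ≤ s) : s ∈ vee (cSub a) (cSub b) := by
  refine ⟨{s ⊔ a, s ⊔ b}, ?_, ?_⟩
  · intro z hz
    rcases hz with hz | hz
    · exact Or.inl (by simp [hz, cSub])
    · exact Or.inr (by simp [Set.mem_singleton_iff.1 hz, cSub])
  · rw [sInf_pair, ← sup_inf_left, sup_eq_left.2 h]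

lemma sSup_inf_sSup_bot {S T : Set L} (h : ∀ s ∈ S, ∀ t ∈ T, s ⊓ t = ⊥) :
    sSup S ⊓ sSup T = ⊥ := by
  rw [sSup_inf_sSup]
  refine le_antisymm (iSup_le fun p => iSup_le fun hp => ?_) bot_le
  exact le_of_eq (h p.1 hp.1 p.2 hp.2)

/-- A connected nonzero element below a pairwise-disjoint join lies below one member. -/
lemma conn_le_mem {v : L} (hv : ConnElem v) (hv0 : v ≠ ⊥) {T : Set L}
    (hTd : ∀ a ∈ T, ∀ b ∈ T, a ≠ b → a ⊓ b = ⊥) (hle : v ≤ sSup T) :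
    ∃ e ∈ T, v ≤ e := by
  have hveq : v = ⨆ e ∈ T, v ⊓ e := by
    rw [← inf_sSup_eq, inf_eq_left.2 hle]
  have hex : ∃ e ∈ T, v ⊓ e ≠ ⊥ := by
    by_contra hc
    push_neg at hc
    apply hv0
    rw [hveq]
    refine le_antisymm (iSup_le fun e => iSup_le fun he => le_of_eq (hc e he)) bot_le
  obtain ⟨e, heT, hne⟩ := hex
  have hsplit : sSup T = e ⊔ sSup (T \ {e}) := by
    refine le_antisymm (sSup_le fun a ha => ?_) ?_
    · by_cases hae : a = e
      · exact hae ▸ le_sup_left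
      · exact le_sup_of_le_right (le_sSup ⟨ha, hae⟩)
    · exact sup_le (le_sSup heT) (sSup_le fun a ha => le_sSup ha.1)
  have hveq2 : v = (v ⊓ e) ⊔ (v ⊓ sSup (T \ {e})) := by
    rw [← inf_sup_left, ← hsplit, inf_eq_left.2 hle]
  have h1 : e ⊓ sSup (T \ {e}) = ⊥ := by
    rw [inf_sSup_eq]
    refine le_antisymm (iSup_le fun a => iSup_le fun ha => ?_) bot_le
    exact le_of_eq (hTd _ heT _ ha.1 (fun h => ha.2 h.symm))
  have hdisj : (v ⊓ e) ⊓ (v ⊓ sSup (T \ {e})) = ⊥ := by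
    refine le_antisymm ?_ bot_le
    calc (v ⊓ e) ⊓ (v ⊓ sSup (T \ {e})) ≤ e ⊓ sSup (T \ {e}) :=
      inf_le_inf inf_le_right inf_le_right
      _ = ⊥ := h1
  rcases hv _ _ hveq2 hdisj with h | h
  · exact absurd h hne
  · refine ⟨e, heT, ?_⟩
    have : v = v ⊓ e := by conv_lhs => rw [hveq2, h, sup_bot_eq]
    exact le_of_eq_of_le this inf_le_right

end AuxStmt16
section AuxStmt16b

/-- The open sublocale of a connected element is connected. -/
lemma subConnected_oSub {v : L} (hv : ConnElem v) : SubConnected (oSub v) := by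
  intro a b hsub hint
  have h1 : ∀ z ∈ oSub v, a ⊓ b ≤ z := by
    intro z hz
    obtain ⟨M, hM, hzM⟩ := hsub hz
    rw [hzM]
    refine le_sInf fun m hm => ?_
    rcases hM hm with h | h
    · exact le_trans inf_le_left h
    · exact le_trans inf_le_right h
  have hzab : v ⇨ (a ⊔ b) ∈ oSub v := by
    show v ⇨ (v ⇨ (a ⊔ b)) = v ⇨ (a ⊔ b)
    rw [himp_himp, inf_idem]
  have hvab : v ≤ a ⊔ b := by
    have hmem : v ⇨ (a ⊔ b) ∈ oSub v ∩ cSub a ∩ cSub b := by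
      refine ⟨⟨hzab, ?_⟩, ?_⟩
      · exact le_trans le_sup_left (le_himp_iff.2 inf_le_left)
      · exact le_trans le_sup_right (le_himp_iff.2 inf_le_left)
    rw [hint] at hmem
    exact himp_eq_top_iff.1 hmem
  have hbot : (v ⊓ a) ⊓ (v ⊓ b) = ⊥ := by
    have h2 : a ⊓ b ≤ v ⇨ ⊥ := h1 _ (compl_mem_oSub v)
    refine le_antisymm ?_ bot_le
    calc (v ⊓ a) ⊓ (v ⊓ b) ≤ (a ⊓ b) ⊓ v :=
          le_inf (inf_le_inf inf_le_right inf_le_right) (le_trans inf_le_left inf_le_left)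
      _ ≤ ⊥ := le_himp_iff.1 h2
  have hveq : v = (v ⊓ a) ⊔ (v ⊓ b) := by
    rw [← inf_sup_left, inf_eq_left.2 hvab]
  rcases hv _ _ hveq hbot with h | h
  · -- v ⊓ a = ⊥, so v ≤ b
    have hvb : v ≤ b := by
      have : v = v ⊓ b := by conv_lhs => rw [hveq, h, bot_sup_eq]
      exact le_of_eq_of_le this inf_le_right
    refine Or.inr (Set.Subset.antisymm (fun z hz => ?_) ?_)
    · have : v ≤ z := le_trans hvb hz.2
      have := himp_eq_top_iff.2 this
      rw [hz.1] at this
      simpa using this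
    · intro z hz
      rw [Set.mem_singleton_iff] at hz
      subst hz
      exact ⟨top_mem_oSub, le_top⟩
  · have hva : v ≤ a := by
      have : v = v ⊓ a := by conv_lhs => rw [hveq, h, sup_bot_eq]
      exact le_of_eq_of_le this inf_le_right
    refine Or.inl (Set.Subset.antisymm (fun z hz => ?_) ?_)
    · have : v ≤ z := le_trans hva hz.2
      have := himp_eq_top_iff.2 this
      rw [hz.1] at this
      simpa using this
    · intro z hz
      rw [Set.mem_singleton_iff] at hz
      subst hz
      exact ⟨top_mem_oSub, le_top⟩

/-- Maximality: any connected sublocale of `oSub u` meeting `oSub w` is inside it,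
when `w` is one of a pairwise disjoint decomposition of `u`. -/
lemma oSub_comp_max {u w : L} {W : Set L}
    (hWd : ∀ a ∈ W, ∀ b ∈ W, a ≠ b → a ⊓ b = ⊥) (hWu : sSup W = u) (hwW : w ∈ W)
    (S : Set L) (hS : IsSublocale S) (hSu : S ⊆ oSub u) (hSc : SubConnected S)
    (hm : Meets S (oSub w)) : S ⊆ oSub w := by
  classical
  set w' := sSup (W \ {w}) with hw'
  have htopS : ⊤ ∈ S := top_mem_of_isSublocale hS
  have hdisj : w ⊓ w' = ⊥ := by
    rw [hw']
    have := sSup_inf_sSup_bot (S := {w}) (T := W \ {w})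
      (fun s hs t ht => by rcases hs with rfl; exact hWd _ hwW _ ht.1 fun h => ht.2 h.symm)
    rw [sSup_singleton] at this
    exact this
  have hsup : w ⊔ w' = u := by
    rw [← hWu]
    refine le_antisymm (sup_le (le_sSup hwW) (sSup_le fun a ha => le_sSup ha.1))
      (sSup_le fun a ha => ?_)
    by_cases h : a = w
    · exact h ▸ le_sup_left
    · exact le_sup_of_le_right (le_sSup ⟨ha, h⟩)
  have htop_of_ge_u : ∀ s ∈ S, u ≤ s → s = ⊤ := by
    intro s hs hle
    have h1 : u ⇨ s = s := hSu hs
    rw [← h1]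
    exact himp_eq_top_iff.2 hle
  have hSw' : S ∩ oSub w' = ({⊤} : Set L) := by
    by_contra hne
    obtain ⟨τ, hτ, hτt⟩ := exists_ne_top_of_ne (S := S ∩ oSub w') ⟨htopS, top_mem_oSub⟩ hne
    obtain ⟨σ, hσ, hσt⟩ := exists_ne_top_of_ne (S := S ∩ oSub w) ⟨htopS, top_mem_oSub⟩ hm
    have hvee : S ⊆ vee (cSub w) (cSub w') := fun s _ =>
      mem_vee_cSub (by rw [hdisj]; exact bot_le)
    have hint : S ∩ cSub w ∩ cSub w' = ({⊤} : Set L) := by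
      refine Set.Subset.antisymm (fun z hz => ?_) ?_
      · have : u ≤ z := by rw [← hsup]; exact sup_le hz.1.2 hz.2
        simpa using htop_of_ge_u z hz.1.1 this
      · intro z hz
        rw [Set.mem_singleton_iff] at hz
        subst hz
        exact ⟨⟨htopS, le_top⟩, le_top⟩
    rcases hSc w w' hvee hint with h | h
    · -- τ ∈ oSub w' ⊆ cSub w
      have hτw : w ≤ τ := by
        refine le_trans ?_ (compl_le_of_mem_oSub hτ.2)
        exact le_himp_iff.2 (le_of_eq hdisj)
      have : τ ∈ S ∩ cSub w := ⟨hτ.1, hτw⟩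
      rw [h] at this
      exact hτt (by simpa using this)
    · have hσw : w' ≤ σ := by
        refine le_trans ?_ (compl_le_of_mem_oSub hσ.2)
        exact le_himp_iff.2 (le_of_eq (by rw [inf_comm]; exact hdisj))
      have : σ ∈ S ∩ cSub w' := ⟨hσ.1, hσw⟩
      rw [h] at this
      exact hσt (by simpa using this)
  intro s hs
  have hw's : w' ≤ s := le_of_miss_oSub hS hSw' s hs
  have h1 : u ⇨ s = s := hSu hs
  have h2 : u ⇨ s = w ⇨ s := by
    rw [← hsup, sup_himp_distrib, himp_eq_top_iff.2 hw's, inf_top_eq]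
  show w ⇨ s = s
  rw [← h2, h1]

end AuxStmt16b
section AuxStmt16c

/-- Decomposition of an element of a locally connected frame into pairwise disjoint
nonzero connected "components". -/
lemma exists_comps (hlc : LocConn L) (u : L) :
    ∃ W : Set L, (∀ w ∈ W, ConnElem w ∧ w ≠ ⊥) ∧
      (∀ w ∈ W, ∀ w' ∈ W, w ≠ w' → w ⊓ w' = ⊥) ∧ sSup W = u := by
  classical
  obtain ⟨F, hF, hsup⟩ := hlc u
  set F' : Set L := {v ∈ F | v ≠ ⊥} with hF'
  set r : L → L → Prop := fun a b => a ∈ F' ∧ b ∈ F' ∧ a ⊓ b ≠ ⊥ with hr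
  have hrsymm : ∀ a b, r a b → r b a := fun a b h =>
    ⟨h.2.1, h.1, by rw [inf_comm]; exact h.2.2⟩
  set cls : L → Set L := fun v => {a | a ∈ F' ∧ Relation.ReflTransGen r v a} with hcls
  set W : Set L := {w | ∃ v ∈ F', w = sSup (cls v)} with hW
  have hsymmR : ∀ a b, Relation.ReflTransGen r a b → Relation.ReflTransGen r b a := by
    intro a b h
    induction h with
    | refl => exact Relation.ReflTransGen.refl
    | tail h1 h2 ih =>
      exact Relation.ReflTransGen.trans (Relation.ReflTransGen.single (hrsymm _ _ h2)) ih
  have hclseq : ∀ v a, Relation.ReflTransGen r v a → cls v = cls a := by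
    intro v a h
    ext z
    constructor
    · intro hz; exact ⟨hz.1, Relation.ReflTransGen.trans (hsymmR v a h) hz.2⟩
    · intro hz; exact ⟨hz.1, Relation.ReflTransGen.trans h hz.2⟩
  have hclsF : ∀ v, cls v ⊆ F' := fun v a ha => ha.1
  refine ⟨W, ?_, ?_, ?_⟩
  · rintro w ⟨v, hv, rfl⟩
    constructor
    · -- connectedness of the class join
      intro b c hbc hbcd
      have hmem_cls : ∀ a ∈ cls v, a ≤ b ∨ a ≤ c := by
        intro a ha
        have haF : a ∈ F := ha.1.1
        have hle : a ≤ b ⊔ c := by rw [← hbc]; exact le_sSup ha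
        have heq : a = (a ⊓ b) ⊔ (a ⊓ c) := by rw [← inf_sup_left, inf_eq_left.2 hle]
        have hd : (a ⊓ b) ⊓ (a ⊓ c) = ⊥ :=
          le_antisymm (le_trans (inf_le_inf inf_le_right inf_le_right) (le_of_eq hbcd)) bot_le
        rcases hF a haF _ _ heq hd with h | h
        · right
          have : a = a ⊓ c := by conv_lhs => rw [heq, h, bot_sup_eq]
          exact le_of_eq_of_le this inf_le_right
        · left
          have : a = a ⊓ b := by conv_lhs => rw [heq, h, sup_bot_eq]
          exact le_of_eq_of_le this inf_le_right
      have hexcl : ∀ a, a ∈ F' → a ≤ b → a ≤ c → False := by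
        intro a ha h1 h2
        exact ha.2 (le_antisymm (le_trans (le_inf h1 h2) (le_of_eq hbcd)) bot_le)
      have hiff : ∀ a, Relation.ReflTransGen r v a → a ∈ F' → (a ≤ b ↔ v ≤ b) := by
        intro a h
        induction h with
        | refl => exact fun _ => Iff.rfl
        | @tail m a' h1 h2 ih =>
          intro ha'F
          have h2' := h2
          obtain ⟨hmF, _, hma⟩ := h2'
          have hmcls : m ∈ cls v := ⟨hmF, h1⟩
          have hacls : a' ∈ cls v := ⟨ha'F, Relation.ReflTransGen.tail h1 h2⟩
          have step : a' ≤ b ↔ m ≤ b := by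
            constructor
            · intro hab
              rcases hmem_cls m hmcls with h | h
              · exact h
              · exfalso
                apply hma
                refine le_antisymm ?_ bot_le
                calc m ⊓ a' ≤ c ⊓ b := inf_le_inf h hab
                  _ = ⊥ := by rw [inf_comm]; exact hbcd
            · intro hmb
              rcases hmem_cls a' hacls with h | h
              · exact h
              · exfalso
                apply hma
                refine le_antisymm ?_ bot_le
                calc m ⊓ a' ≤ b ⊓ c := inf_le_inf hmb h
                  _ = ⊥ := hbcd
          exact step.trans (ih hmF)
      have hvcls : v ∈ cls v := ⟨hv, Relation.ReflTransGen.refl⟩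
      rcases hmem_cls v hvcls with hvb | hvc
      · right
        have hsb : sSup (cls v) ≤ b := sSup_le fun a ha => (hiff a ha.2 ha.1).2 hvb
        have hcb : c ≤ b := le_trans (le_of_le_of_eq le_sup_right hbc.symm) hsb
        exact le_antisymm (le_trans (le_inf hcb le_rfl) (le_of_eq hbcd)) bot_le
      · left
        have hsc : sSup (cls v) ≤ c := by
          refine sSup_le fun a ha => ?_
          rcases hmem_cls a ha with h | h
          · exact absurd hvc (fun hvc' => hexcl v hv ((hiff a ha.2 ha.1).1 h) hvc')
          · exact h
        have hbc' : b ≤ c := le_trans (le_of_le_of_eq le_sup_left hbc.symm) hsc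
        exact le_antisymm (le_trans (le_inf le_rfl hbc') (le_of_eq hbcd)) bot_le
    · -- nonzero
      intro h
      exact hv.2 (le_antisymm (le_of_le_of_eq (le_sSup (show v ∈ cls v from ⟨hv, Relation.ReflTransGen.refl⟩)) h) bot_le)
  · rintro w ⟨v, hv, rfl⟩ w' ⟨v', hv', rfl⟩ hne
    refine sSup_inf_sSup_bot fun a ha b hb => ?_
    by_contra hab
    have hrab : r a b := ⟨ha.1, hb.1, hab⟩
    have hreach : Relation.ReflTransGen r v v' :=
      Relation.ReflTransGen.trans ha.2
        (Relation.ReflTransGen.trans (Relation.ReflTransGen.single hrab) (hsymmR v' b hb.2))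
    exact hne (by rw [hclseq v v' hreach])
  · refine le_antisymm ?_ ?_
    · refine sSup_le ?_
      rintro w ⟨v, _, rfl⟩
      refine le_trans (sSup_le_sSup fun a ha => (hclsF v ha).1) (le_of_eq hsup.symm)
    · rw [hsup]
      refine sSup_le fun a haF => ?_
      by_cases h0 : a = ⊥
      · exact h0 ▸ bot_le
      · have haF' : a ∈ F' := ⟨haF, h0⟩
        refine le_trans (le_sSup (show a ∈ cls a from ⟨haF', Relation.ReflTransGen.refl⟩)) ?_
        exact le_sSup ⟨a, haF', rfl⟩

/-- A component of `x ⊓ y` whose closure misses `cSub x` is a full component of `y`. -/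
lemma comp_upgrade {x y w : L} {W Wy : Set L}
    (hWd : ∀ a ∈ W, ∀ b ∈ W, a ≠ b → a ⊓ b = ⊥) (hWu : sSup W = x ⊓ y)
    (hwW : w ∈ W) (hwc : ConnElem w) (hw0 : w ≠ ⊥)
    (hWyc : ∀ e ∈ Wy, ConnElem e ∧ e ≠ ⊥)
    (hWyd : ∀ a ∈ Wy, ∀ b ∈ Wy, a ≠ b → a ⊓ b = ⊥) (hWyy : sSup Wy = y)
    (hmiss : (w ⇨ ⊥) ⊔ x = ⊤) : w ∈ Wy := by
  have hwu : w ≤ x ⊓ y := le_of_le_of_eq (le_sSup hwW) hWu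
  have hwy : w ≤ y := hwu.trans inf_le_right
  obtain ⟨e, heWy, hwe⟩ := conn_le_mem hwc hw0 hWyd (hwy.trans_eq hWyy.symm)
  have hec : ConnElem e := (hWyc e heWy).1
  have hey : e ≤ y := le_of_le_of_eq (le_sSup heWy) hWyy
  have hdnotw : ∀ a ∈ W, a ≠ w → a ≤ w ⇨ ⊥ := by
    intro a haW haw
    exact le_himp_iff.2 (le_of_eq (hWd a haW w hwW haw))
  have he1 : e = (e ⊓ (w ⇨ ⊥)) ⊔ (e ⊓ x) := by
    conv_lhs => rw [← inf_top_eq e, ← hmiss, inf_sup_left]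
  have hex : e ⊓ x ≤ w ⊔ (e ⊓ (w ⇨ ⊥)) := by
    have h1 : e ⊓ x ≤ sSup W := by
      rw [hWu]; exact le_inf inf_le_right (inf_le_left.trans hey)
    have h2 : e ⊓ x = ⨆ a ∈ W, (e ⊓ x) ⊓ a := by rw [← inf_sSup_eq, inf_eq_left.2 h1]
    rw [h2]
    refine iSup_le fun a => iSup_le fun haW => ?_
    by_cases haw : a = w
    · exact le_sup_of_le_left (haw ▸ inf_le_right)
    · refine le_sup_of_le_right (le_inf (le_trans inf_le_left inf_le_left) ?_)
      exact le_trans inf_le_right (hdnotw a haW haw)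
  have heq : e = w ⊔ (e ⊓ (w ⇨ ⊥)) := by
    refine le_antisymm ?_ (sup_le hwe inf_le_left)
    calc e = (e ⊓ (w ⇨ ⊥)) ⊔ (e ⊓ x) := he1
      _ ≤ (e ⊓ (w ⇨ ⊥)) ⊔ (w ⊔ (e ⊓ (w ⇨ ⊥))) := sup_le_sup_left hex _
      _ = w ⊔ (e ⊓ (w ⇨ ⊥)) := by rw [sup_comm (e ⊓ (w ⇨ ⊥)) (w ⊔ (e ⊓ (w ⇨ ⊥))), sup_assoc, sup_idem]
  have hd : w ⊓ (e ⊓ (w ⇨ ⊥)) = ⊥ := by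
    refine le_antisymm ?_ bot_le
    calc w ⊓ (e ⊓ (w ⇨ ⊥)) ≤ (w ⇨ ⊥) ⊓ w := le_inf (inf_le_right.trans inf_le_right) inf_le_left
      _ ≤ ⊥ := himp_inf_le
  rcases hec _ _ heq hd with h | h
  · exact absurd h hw0
  · have he2 : e = e ⊓ x := by conv_lhs => rw [he1, h, bot_sup_eq]
    have hew : e ≤ w := by
      have h1 : e ≤ sSup W := by
        rw [hWu]
        exact le_inf (le_of_eq_of_le he2 inf_le_right) hey
      have h2 : e = ⨆ a ∈ W, e ⊓ a := by rw [← inf_sSup_eq, inf_eq_left.2 h1]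
      rw [h2]
      refine iSup_le fun a => iSup_le fun haW => ?_
      by_cases haw : a = w
      · exact haw ▸ inf_le_right
      · have : e ⊓ a ≤ e ⊓ (w ⇨ ⊥) := inf_le_inf le_rfl (hdnotw a haW haw)
        exact le_trans this (le_of_eq_of_le h bot_le)
    have : e = w := le_antisymm hew hwe
    exact this ▸ heWy

end AuxStmt16c
theorem stmt16 (hc : ConnElem (⊤ : L)) (hlc : LocConn L) (x y : L)
    (hA : cSub x ≠ ({⊤} : Set L)) (hB : cSub y ≠ ({⊤} : Set L))
    (hd : cSub x ∩ cSub y = ({⊤} : Set L))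
    (N : Set L) (hN : IsSublocale N) (hNc : SubConnected N)
    (hNA : Meets N (cSub x)) (hNB : Meets N (cSub y)) :
    ∃ D : Set L, IsComponent D (oSub (x ⊓ y)) ∧ Meets N D ∧
      Meets (clo D) (cSub x) ∧ Meets (clo D) (cSub y) := by
  classical
  have htopN : ⊤ ∈ N := top_mem_of_isSublocale hN
  have hxy_top : x ⊔ y = ⊤ := by
    have hmem : x ⊔ y ∈ cSub x ∩ cSub y := ⟨le_sup_left, le_sup_right⟩
    rw [hd] at hmem
    simpa using hmem
  obtain ⟨W, hWc, hWd, hWu⟩ := exists_comps hlc (x ⊓ y)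
  obtain ⟨Wx, hWxc, hWxd, hWxx⟩ := exists_comps hlc x
  obtain ⟨Wy, hWyc, hWyd, hWyy⟩ := exists_comps hlc y
  have key : ∃ w ∈ W, Meets N (oSub w) ∧ (w ⇨ ⊥) ⊔ x ≠ ⊤ ∧ (w ⇨ ⊥) ⊔ y ≠ ⊤ := by
    by_contra hcon
    push_neg at hcon
    set Y : Set L := {w ∈ W | (w ⇨ ⊥) ⊔ x = ⊤} with hYdef
    set X : Set L := {w ∈ W | w ∉ Y ∧ (w ⇨ ⊥) ⊔ y = ⊤} with hXdef
    set G : Set L := {w ∈ W | w ∉ Y ∧ w ∉ X} with hGdef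
    have hGmiss : ∀ w ∈ G, N ∩ oSub w = ({⊤} : Set L) := by
      intro w hw
      by_contra hne
      have h1 : (w ⇨ ⊥) ⊔ x ≠ ⊤ := fun h => hw.2.1 ⟨hw.1, h⟩
      have h2 := hcon w hw.1 hne h1
      exact hw.2.2 ⟨hw.1, hw.2.1, h2⟩
    have hsG : ∀ s ∈ N, sSup G ≤ s := fun s hs =>
      sSup_le fun w hw => le_of_miss_oSub hN (hGmiss w hw) s hs
    have hYsub : Y ⊆ Wy := fun w hw =>
      comp_upgrade hWd hWu hw.1 (hWc w hw.1).1 (hWc w hw.1).2 hWyc hWyd hWyy hw.2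
    have hXsub : X ⊆ Wx := fun w hw =>
      comp_upgrade hWd (by rw [hWu, inf_comm]) hw.1 (hWc w hw.1).1 (hWc w hw.1).2
        hWxc hWxd hWxx hw.2.2
    set nX := sSup X ⇨ ⊥ with hnX
    set nY := sSup Y ⇨ ⊥ with hnY
    have hdisjXY : sSup X ⊓ sSup Y = ⊥ := sSup_inf_sSup_bot fun a ha b hb =>
      hWd a ha.1 b hb.1 (fun h => ha.2.1 (show a ∈ Y by rw [h]; exact hb))
    have hYe' : sSup Y ⊓ sSup (Wy \ Y) = ⊥ := sSup_inf_sSup_bot fun a ha b hb =>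
      hWyd a (hYsub ha) b hb.1 (fun h => hb.2 (show b ∈ Y by rw [← h]; exact ha))
    have hXf' : sSup X ⊓ sSup (Wx \ X) = ⊥ := sSup_inf_sSup_bot fun a ha b hb =>
      hWxd a (hXsub ha) b hb.1 (fun h => hb.2 (show b ∈ X by rw [← h]; exact ha))
    have hle_x : sSup Y ≤ x :=
      sSup_le fun w hw => le_trans (le_of_le_of_eq (le_sSup hw.1) hWu) inf_le_left
    have hySplit : y = sSup Y ⊔ sSup (Wy \ Y) := by
      rw [← hWyy, ← sSup_union, Set.union_diff_cancel hYsub]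
    have hxSplit : x = sSup X ⊔ sSup (Wx \ X) := by
      rw [← hWxx, ← sSup_union, Set.union_diff_cancel hXsub]
    have he'nY : sSup (Wy \ Y) ≤ nY := le_himp_iff.2 (by rw [inf_comm]; exact le_of_eq hYe')
    have hf'nX : sSup (Wx \ X) ≤ nX := le_himp_iff.2 (by rw [inf_comm]; exact le_of_eq hXf')
    have halpha : x ⊔ nY = ⊤ := by
      refine le_antisymm le_top ?_
      rw [← hxy_top]
      refine sup_le le_sup_left ?_
      calc y = sSup Y ⊔ sSup (Wy \ Y) := hySplit
        _ ≤ x ⊔ nY := sup_le (hle_x.trans le_sup_left) (he'nY.trans le_sup_right)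
    have hbeta : y ⊔ nX = ⊤ := by
      refine le_antisymm le_top ?_
      rw [← hxy_top]
      refine sup_le ?_ le_sup_left
      calc x = sSup X ⊔ sSup (Wx \ X) := hxSplit
        _ ≤ y ⊔ nX := sup_le
            ((sSup_le fun w hw => le_trans (le_of_le_of_eq (le_sSup hw.1) hWu) inf_le_right).trans
              le_sup_left)
            (hf'nX.trans le_sup_right)
    have hgamma : nX ⊔ nY = ⊤ := by
      refine le_antisymm le_top ?_
      rw [← hxy_top]
      refine sup_le ?_ ?_
      · calc x = sSup X ⊔ sSup (Wx \ X) := hxSplit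
          _ ≤ nY ⊔ nX := sup_le
              ((le_himp_iff.2 (le_of_eq hdisjXY)).trans le_sup_left)
              (hf'nX.trans le_sup_right)
          _ = nX ⊔ nY := sup_comm _ _
      · calc y = sSup Y ⊔ sSup (Wy \ Y) := hySplit
          _ ≤ nX ⊔ nY := sup_le
              ((le_himp_iff.2 (by rw [inf_comm]; exact le_of_eq hdisjXY)).trans le_sup_left)
              (he'nY.trans le_sup_right)
    have hab_top : (x ⊓ nX) ⊔ (y ⊓ nY) = ⊤ := by
      rw [sup_inf_left, sup_inf_right, sup_inf_right, hxy_top, halpha, hgamma,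
        sup_comm nX y, hbeta]
      simp
    have hab_le : (x ⊓ nX) ⊓ (y ⊓ nY) ≤ sSup G := by
      have hle : (x ⊓ nX) ⊓ (y ⊓ nY) ≤ sSup W ⊓ (nX ⊓ nY) := by
        refine le_inf ?_ (le_inf (inf_le_left.trans inf_le_right)
          (inf_le_right.trans inf_le_right))
        rw [hWu]
        exact le_inf (inf_le_left.trans inf_le_left) (inf_le_right.trans inf_le_left)
      refine le_trans hle ?_
      rw [sSup_inf_eq]
      refine iSup_le fun w => iSup_le fun hwW => ?_
      by_cases hwY : w ∈ Y
      · refine le_trans ?_ bot_le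
        calc w ⊓ (nX ⊓ nY) ≤ nY ⊓ sSup Y :=
              le_inf (inf_le_right.trans inf_le_right) (inf_le_left.trans (le_sSup hwY))
          _ ≤ ⊥ := himp_inf_le
      · by_cases hwX : w ∈ X
        · refine le_trans ?_ bot_le
          calc w ⊓ (nX ⊓ nY) ≤ nX ⊓ sSup X :=
                le_inf (inf_le_right.trans inf_le_left) (inf_le_left.trans (le_sSup hwX))
            _ ≤ ⊥ := himp_inf_le
        · exact inf_le_left.trans (le_sSup ⟨hwW, hwY, hwX⟩)
    have hvee : N ⊆ vee (cSub (x ⊓ nX)) (cSub (y ⊓ nY)) := fun s hs =>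
      mem_vee_cSub (le_trans hab_le (hsG s hs))
    have hint : N ∩ cSub (x ⊓ nX) ∩ cSub (y ⊓ nY) = ({⊤} : Set L) := by
      refine Set.Subset.antisymm (fun z hz => ?_) ?_
      · have h1 : ⊤ ≤ z := by rw [← hab_top]; exact sup_le hz.1.2 hz.2
        simpa using top_le_iff.1 h1
      · intro z hz
        rw [Set.mem_singleton_iff] at hz
        subst hz
        exact ⟨⟨htopN, le_top⟩, le_top⟩
    rcases hNc _ _ hvee hint with h | h
    · apply hNA
      refine Set.Subset.antisymm (fun z hz => ?_) ?_
      · have hz2 : z ∈ N ∩ cSub (x ⊓ nX) := ⟨hz.1, le_trans inf_le_left hz.2⟩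
        rw [h] at hz2
        exact hz2
      · intro z hz
        rw [Set.mem_singleton_iff] at hz
        subst hz
        exact ⟨htopN, le_top⟩
    · apply hNB
      refine Set.Subset.antisymm (fun z hz => ?_) ?_
      · have hz2 : z ∈ N ∩ cSub (y ⊓ nY) := ⟨hz.1, le_trans inf_le_left hz.2⟩
        rw [h] at hz2
        exact hz2
      · intro z hz
        rw [Set.mem_singleton_iff] at hz
        subst hz
        exact ⟨htopN, le_top⟩
  obtain ⟨w, hwW, hmNw, hgx, hgy⟩ := key
  have hw0 : w ≠ ⊥ := (hWc w hwW).2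
  have hwle : w ≤ x ⊓ y := le_of_le_of_eq (le_sSup hwW) hWu
  refine ⟨oSub w, ⟨oSub_isSublocale w, oSub_mono hwle, ?_, subConnected_oSub (hWc w hwW).1,
    fun S hS hSu hSc hm => oSub_comp_max hWd hWu hwW S hS hSu hSc hm⟩, hmNw, ?_, ?_⟩
  · intro h
    have hmem : w ⇨ ⊥ ∈ ({⊤} : Set L) := h ▸ compl_mem_oSub w
    have h2 : w ⇨ ⊥ = ⊤ := by simpa using hmem
    exact hw0 (le_antisymm (himp_eq_top_iff.1 h2) bot_le)
  · intro he
    apply hgx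
    have hmem : (w ⇨ ⊥) ⊔ x ∈ clo (oSub w) ∩ cSub x := by
      refine ⟨?_, le_sup_right⟩
      rw [clo_oSub]
      exact le_sup_left
    rw [he] at hmem
    simpa using hmem
  · intro he
    apply hgy
    have hmem : (w ⇨ ⊥) ⊔ y ∈ clo (oSub w) ∩ cSub y := by
      refine ⟨?_, le_sup_right⟩
      rw [clo_oSub]
      exact le_sup_left
    rw [he] at hmem
    simpa using hmem
end

section
/- Let L be a connected frame and C a continuum in L (a nonvoid closed connected sublocale). Then every component U of L∖C is simple, i.e. both U and L∖U are connected. -/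
open Order Set

variable {L : Type*} [Order.Frame L]

namespace Scratch
variable {S T U A B X Y Z : Set L} {a b c p q u x : L}


variable {S T A B X Y Z : Set L} {a b c p q u x : L}

lemma top_mem (h : IsSublocale S) : ⊤ ∈ S := by
  have := h.1 ∅ (empty_subset _); simpa using this

lemma isSub_inter (hS : IsSublocale S) (hT : IsSublocale T) : IsSublocale (S ∩ T) := by
  constructor
  · intro M hM
    exact ⟨hS.1 M (hM.trans inter_subset_left), hT.1 M (hM.trans inter_subset_right)⟩
  · intro x s hs
    exact ⟨hS.2 x s hs.1, hT.2 x s hs.2⟩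

lemma isSub_cSub : IsSublocale (cSub a : Set L) := by
  constructor
  · intro M hM
    exact le_sInf fun m hm => hM hm
  · intro x s hs
    exact le_trans hs le_himp

lemma isSub_oSub : IsSublocale (oSub u : Set L) := by
  constructor
  · intro M hM
    refine le_antisymm ?_ le_himp
    refine le_sInf fun m hm => ?_
    calc u ⇨ sInf M ≤ u ⇨ m := himp_le_himp_left (sInf_le hm)
    _ = m := hM hm
  · intro x s hs
    show u ⇨ (x ⇨ s) = x ⇨ s
    rw [himp_himp, inf_comm, ← himp_himp, hs]

lemma isSub_Ici : IsSublocale (Ici a : Set L) := isSub_cSub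

lemma isSub_clo : IsSublocale (clo S : Set L) := isSub_cSub

lemma isSub_vee (hS : IsSublocale S) (hT : IsSublocale T) : IsSublocale (vee S T) := by
  constructor
  · intro M hM
    choose W hW1 hW2 using fun (m : M) => hM m.2
    refine ⟨⋃ m : M, W m, by simpa using fun m => hW1 m, le_antisymm ?_ ?_⟩
    · refine le_sInf fun n hn => ?_
      simp only [mem_iUnion] at hn
      obtain ⟨m, hn⟩ := hn
      exact (sInf_le m.2).trans ((hW2 m).le.trans (sInf_le hn))
    · refine le_sInf fun m hm => ?_
      exact (sInf_le_sInf (subset_iUnion W (⟨m, hm⟩ : M))).trans (hW2 ⟨m, hm⟩).ge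
  · intro x s hs
    obtain ⟨M, hM, rfl⟩ := hs
    refine ⟨(x ⇨ ·) '' M, ?_, ?_⟩
    · rintro _ ⟨m, hm, rfl⟩
      rcases hM hm with h | h
      · exact Or.inl (hS.2 x m h)
      · exact Or.inr (hT.2 x m h)
    · refine le_antisymm (le_sInf ?_) ?_
      · rintro _ ⟨m, hm, rfl⟩
        exact himp_le_himp_left (sInf_le hm)
      · rw [le_himp_iff]
        refine le_sInf fun m hm => ?_
        calc sInf ((x ⇨ ·) '' M) ⊓ x ≤ (x ⇨ m) ⊓ x :=
              inf_le_inf_right _ (sInf_le ⟨m, hm, rfl⟩)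
        _ ≤ m := himp_inf_le

lemma mem_vee_iff (hS : IsSublocale S) (hT : IsSublocale T) :
    x ∈ vee S T ↔ ∃ s ∈ S, ∃ t ∈ T, x = s ⊓ t := by
  constructor
  · rintro ⟨M, hM, rfl⟩
    refine ⟨sInf (M ∩ S), hS.1 _ inter_subset_right, sInf (M ∩ T), hT.1 _ inter_subset_right, ?_⟩
    rw [← sInf_union, ← inter_union_distrib_left, inter_eq_left.2 hM]
  · rintro ⟨s, hs, t, ht, rfl⟩
    exact ⟨{s, t}, by rintro z (rfl | hz); exact Or.inl hs; exact Or.inr (by simpa using hz ▸ ht),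
      (sInf_pair).symm⟩

lemma vee_comm : vee A B = vee B A := by unfold vee; rw [union_comm]

lemma vee_mono {A' B' : Set L} (h1 : A ⊆ A') (h2 : B ⊆ B') : vee A B ⊆ vee A' B' := by
  rintro x ⟨M, hM, rfl⟩
  exact ⟨M, hM.trans (union_subset_union h1 h2), rfl⟩

lemma subset_vee_left : A ⊆ vee A B := by
  intro x hx
  exact ⟨{x}, by simpa using Or.inl hx, by simp⟩

lemma subset_vee_right : B ⊆ vee A B := by
  intro x hx
  exact ⟨{x}, by simpa using Or.inr hx, by simp⟩

lemma vee_subset (hS : IsSublocale S) (h1 : A ⊆ S) (h2 : B ⊆ S) : vee A B ⊆ S := by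
  rintro x ⟨M, hM, rfl⟩
  exact hS.1 M (hM.trans (union_subset h1 h2))

lemma vee_O (hS : IsSublocale S) : vee S ({⊤} : Set L) = S :=
  le_antisymm (vee_subset hS le_rfl (by simpa using top_mem hS)) subset_vee_left

lemma O_vee (hS : IsSublocale S) : vee ({⊤} : Set L) S = S := by
  rw [vee_comm]; exact vee_O hS

lemma veeCC : vee (cSub a) (cSub b) = (Ici (a ⊓ b) : Set L) := by
  ext x
  constructor
  · rintro ⟨M, hM, rfl⟩
    refine le_sInf fun m hm => ?_
    rcases hM hm with h | h
    · exact inf_le_left.trans h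
    · exact inf_le_right.trans h
  · intro hx
    rw [mem_vee_iff isSub_cSub isSub_cSub]
    refine ⟨a ⊔ x, le_sup_left, b ⊔ x, le_sup_left, ?_⟩
    rw [← sup_inf_right, sup_eq_right.2 hx]

lemma vee_assoc (hA : IsSublocale A) (hB : IsSublocale B) (hX : IsSublocale X) :
    vee (vee A B) X = vee A (vee B X) := by
  ext x
  rw [mem_vee_iff (isSub_vee hA hB) hX, mem_vee_iff hA (isSub_vee hB hX)]
  constructor
  · rintro ⟨s, hs, t, ht, rfl⟩
    rw [mem_vee_iff hA hB] at hs
    obtain ⟨a', ha, b', hb, rfl⟩ := hs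
    refine ⟨a', ha, b' ⊓ t, ?_, inf_assoc _ _ _⟩
    rw [mem_vee_iff hB hX]; exact ⟨b', hb, t, ht, rfl⟩
  · rintro ⟨s, hs, t, ht, rfl⟩
    rw [mem_vee_iff hB hX] at ht
    obtain ⟨b', hb, c', hcc, rfl⟩ := ht
    refine ⟨s ⊓ b', ?_, c', hcc, (inf_assoc _ _ _).symm⟩
    rw [mem_vee_iff hA hB]; exact ⟨s, hs, b', hb, rfl⟩

/-- The coframe distributive law. -/
lemma veeD (hX : IsSublocale X) (hY : IsSublocale Y) (hZ : IsSublocale Z) :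
    vee X (Y ∩ Z) = vee X Y ∩ vee X Z := by
  ext x
  constructor
  · intro hx
    rw [mem_vee_iff hX (isSub_inter hY hZ)] at hx
    obtain ⟨s, hs, t, ht, rfl⟩ := hx
    constructor
    · rw [mem_vee_iff hX hY]; exact ⟨s, hs, t, ht.1, rfl⟩
    · rw [mem_vee_iff hX hZ]; exact ⟨s, hs, t, ht.2, rfl⟩
  · rintro ⟨h1, h2⟩
    rw [mem_vee_iff hX hY] at h1
    rw [mem_vee_iff hX hZ] at h2
    obtain ⟨p, hp, s, hs, rfl⟩ := h1
    obtain ⟨p', hp', t, ht, hx⟩ := h2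
    rw [mem_vee_iff hX (isSub_inter hY hZ)]
    have hPmem : p ⊓ p' ∈ X := by
      have := hX.1 {p, p'} (by rintro z (rfl | hz); exact hp; simpa using hz ▸ hp')
      simpa [sInf_pair] using this
    set P := p ⊓ p' with hP
    have hp'le : p ⊓ s ≤ p' := by rw [hx]; exact inf_le_left
    have htle : p ⊓ s ≤ t := by rw [hx]; exact inf_le_right
    have h1 : p ⊓ s = P ⊓ s := by
      apply le_antisymm
      · exact le_inf (le_inf inf_le_left hp'le) inf_le_right
      · exact inf_le_inf_right _ inf_le_left
    have h2 : p ⊓ s = P ⊓ t := by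
      apply le_antisymm
      · exact le_inf (le_inf inf_le_left hp'le) htle
      · calc P ⊓ t ≤ p' ⊓ t := inf_le_inf_right _ inf_le_right
        _ = p ⊓ s := hx.symm
    have hlP : p ⊓ s ≤ P := le_inf inf_le_left hp'le
    refine ⟨P, hPmem, P ⇨ (p ⊓ s), ⟨?_, ?_⟩, ?_⟩
    · have hips : P ⇨ (p ⊓ s) = P ⇨ s := by
        rw [h1, himp_inf_distrib, himp_self, top_inf_eq]
      rw [hips]; exact hY.2 _ _ hs
    · have hipt : P ⇨ (p ⊓ s) = P ⇨ t := by
        rw [h2, himp_inf_distrib, himp_self, top_inf_eq]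
      rw [hipt]; exact hZ.2 _ _ ht
    · apply le_antisymm
      · exact le_inf hlP le_himp
      · exact inf_himp_le


lemma isSub_O : IsSublocale ({⊤} : Set L) := by
  have : ({⊤} : Set L) = Ici ⊤ := by simp
  rw [this]; exact isSub_Ici

lemma eq_O (h1 : S ⊆ ({⊤} : Set L)) (h2 : ⊤ ∈ S) : S = ({⊤} : Set L) :=
  Subset.antisymm h1 (singleton_subset_iff.2 h2)

lemma vee_absorb (hS : IsSublocale S) (hA : A ⊆ S) : vee A S = S :=
  le_antisymm (vee_subset hS hA le_rfl) subset_vee_right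

/-- Finite meet distributes over binary join of sublocales. -/
lemma distS (hS : IsSublocale S) (hA : IsSublocale A) (hB : IsSublocale B) :
    S ∩ vee A B = vee (S ∩ A) (S ∩ B) := by
  have e1 : vee (S ∩ A) (S ∩ B) = vee (S ∩ A) S ∩ vee (S ∩ A) B :=
    veeD (isSub_inter hS hA) hS hB
  have e2 : vee (S ∩ A) S = S := vee_absorb hS inter_subset_left
  have e3 : vee (S ∩ A) B = vee B S ∩ vee B A := by
    rw [vee_comm]; exact veeD hB hS hA
  rw [e1, e2, e3]
  ext x
  constructor
  · rintro ⟨h1, h2⟩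
    refine ⟨h1, subset_vee_right h1, ?_⟩
    rw [vee_comm] at h2; exact h2
  · rintro ⟨h1, _, h3⟩
    rw [vee_comm] at h3; exact ⟨h1, h3⟩

lemma L1 (hS : IsSublocale S) (h1 : S ⊆ Ici (p ⊓ q)) (h2 : S ∩ Ici p = ({⊤} : Set L)) :
    S ⊆ Ici q := by
  intro x hx
  have hmem : (q ⊔ x) ⇨ x ∈ S := hS.2 _ _ hx
  have hp : p ≤ (q ⊔ x) ⇨ x := by
    rw [le_himp_iff, inf_sup_left]
    exact sup_le (h1 hx) inf_le_right
  have : (q ⊔ x) ⇨ x ∈ S ∩ Ici p := ⟨hmem, hp⟩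
  rw [h2] at this
  have htop : (q ⊔ x) ⇨ x = ⊤ := this
  have : q ⊔ x ≤ x := himp_eq_top_iff.1 htop
  exact le_sup_left.trans this

lemma subset_clo : S ⊆ clo S := fun _ hx => sInf_le hx

lemma clo_mono (h : S ⊆ T) : clo S ⊆ (clo T : Set L) := Ici_subset_Ici.2 (sInf_le_sInf h)

lemma clo_subset_Ici (h : S ⊆ Ici a) : clo S ⊆ (Ici a : Set L) :=
  Ici_subset_Ici.2 (le_sInf fun _ hx => h hx)

lemma sInf_vee (hS : IsSublocale S) (hT : IsSublocale T) :
    sInf (vee S T) = sInf S ⊓ sInf T := by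
  apply le_antisymm
  · exact le_inf (sInf_le_sInf subset_vee_left) (sInf_le_sInf subset_vee_right)
  · refine le_sInf fun x hx => ?_
    rw [mem_vee_iff hS hT] at hx
    obtain ⟨s, hs, t, ht, rfl⟩ := hx
    exact inf_le_inf (sInf_le hs) (sInf_le ht)

lemma clo_vee (hS : IsSublocale S) (hT : IsSublocale T) :
    clo (vee S T) = vee (clo S) (clo T) := by
  show Ici (sInf (vee S T)) = vee (cSub (sInf S)) (cSub (sInf T))
  rw [veeCC, sInf_vee hS hT]

lemma decomp (w x : L) : x = (w ⇨ x) ⊓ (w ⊔ x) := by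
  apply le_antisymm (le_inf le_himp le_sup_right)
  rw [inf_sup_left]
  exact sup_le himp_inf_le inf_le_right

lemma o_vee_c (w : L) : vee (oSub w) (cSub w) = (univ : Set L) := by
  apply eq_univ_of_forall
  intro x
  rw [mem_vee_iff isSub_oSub isSub_cSub]
  refine ⟨w ⇨ x, ?_, w ⊔ x, le_sup_left, decomp w x⟩
  show w ⇨ (w ⇨ x) = w ⇨ x
  rw [himp_himp, inf_idem]

lemma top_of_oSub_Ici (h1 : x ∈ oSub u) (h2 : u ≤ x) : x = ⊤ := by
  have h3 : u ⇨ x = x := h1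
  rw [← h3]
  exact himp_eq_top_iff.2 h2

lemma Ici_eq_O (h : (Ici a : Set L) = ({⊤} : Set L)) : a = ⊤ := by
  have : a ∈ Ici a := le_rfl
  rw [h] at this
  exact this

/-- Restatement of connectedness in terms of `Ici`. -/
lemma subConn_iff : SubConnected S ↔ ∀ a b : L, S ⊆ Ici (a ⊓ b) →
    S ∩ Ici (a ⊔ b) = ({⊤} : Set L) →
    (S ∩ Ici a = ({⊤} : Set L) ∨ S ∩ Ici b = ({⊤} : Set L)) := by
  have e : ∀ (a b : L), (S ∩ cSub a ∩ cSub b : Set L) = S ∩ Ici (a ⊔ b) := by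
    intro a b
    rw [inter_assoc]
    congr 1
    exact Ici_inter_Ici
  constructor
  · intro h a b h1 h2
    exact h a b (by rw [veeCC]; exact h1) (by rw [e]; exact h2)
  · intro h a b h1 h2
    rw [veeCC] at h1
    rw [e] at h2
    exact h a b h1 h2

/-- A sublocale squeezed between a connected sublocale and its closure is connected. -/
lemma sandwich (hUs : IsSublocale U) (hUc : SubConnected U) (hTopS : ⊤ ∈ S)
    (h1 : U ⊆ S) (h2 : S ⊆ Ici (sInf U)) : SubConnected S := by
  rw [subConn_iff] at hUc ⊢
  intro a b hab hO
  have hU1 : U ⊆ Ici (a ⊓ b) := h1.trans hab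
  have hU2 : U ∩ Ici (a ⊔ b) = ({⊤} : Set L) :=
    eq_O (fun x hx => by rw [← hO]; exact ⟨h1 hx.1, hx.2⟩) ⟨top_mem hUs, le_top⟩
  have key : ∀ c d : L, U ⊆ Ici (c ⊓ d) → U ∩ Ici c = ({⊤} : Set L) →
      S ∩ Ici (c ⊔ d) = ({⊤} : Set L) → S ∩ Ici c = ({⊤} : Set L) := by
    intro c d hcd hc hOS
    have hUd : U ⊆ Ici d := L1 hUs hcd hc
    have hSd : S ⊆ Ici d := h2.trans (Ici_subset_Ici.2 (le_sInf fun x hx => hUd hx))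
    refine eq_O (fun x hx => ?_) ⟨hTopS, le_top⟩
    rw [← hOS]
    exact ⟨hx.1, sup_le hx.2 (hSd hx.1)⟩
  rcases hUc a b hU1 hU2 with hca | hcb
  · exact Or.inl (key a b hU1 hca hO)
  · refine Or.inr (key b a ?_ hcb ?_)
    · rw [inf_comm]; exact hU1
    · rw [sup_comm]; exact hO

/-- Connectedness of the frame, applied to a separated decomposition of `univ`. -/
lemma connX {E F : Set L} (hc : ConnElem (⊤ : L)) (hE : IsSublocale E) (hF : IsSublocale F)
    (htot : vee E F = (univ : Set L)) (h1 : clo E ∩ F = ({⊤} : Set L))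
    (h2 : E ∩ clo F = ({⊤} : Set L)) : E = ({⊤} : Set L) ∨ F = ({⊤} : Set L) := by
  have hEF : E ∩ F ⊆ ({⊤} : Set L) := fun x hx => by
    rw [← h2]; exact ⟨hx.1, subset_clo hx.2⟩
  have hEc : E = Ici (sInf E) := by
    apply Subset.antisymm subset_clo
    have e : (clo E : Set L) = E := by
      rw [show (clo E : Set L) = clo E ∩ vee E F from by rw [htot, inter_univ],
        distS isSub_clo hE hF, inter_eq_right.2 subset_clo, h1, vee_O hE]
    exact e.le
  have hcloFE : clo F ∩ E = ({⊤} : Set L) := by rw [inter_comm]; exact h2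
  have hFc : F = Ici (sInf F) := by
    apply Subset.antisymm subset_clo
    have e : (clo F : Set L) = F := by
      rw [show (clo F : Set L) = clo F ∩ vee F E from by rw [vee_comm, htot, inter_univ],
        distS isSub_clo hF hE, inter_eq_right.2 subset_clo, hcloFE, vee_O hF]
    exact e.le
  have hinf : sInf E ⊓ sInf F = ⊥ := by
    have : (univ : Set L) = Ici (sInf E ⊓ sInf F) := by
      rw [← htot]
      nth_rewrite 1 [hEc, hFc]
      exact veeCC
    have hb : (⊥ : L) ∈ Ici (sInf E ⊓ sInf F) := by rw [← this]; trivial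
    exact le_antisymm hb bot_le
  have hsup : sInf E ⊔ sInf F = ⊤ := by
    apply Ici_eq_O
    rw [← Ici_inter_Ici]
    refine eq_O (fun x hx => hEF ⟨?_, ?_⟩) ⟨le_top, le_top⟩
    · rw [hEc]; exact hx.1
    · rw [hFc]; exact hx.2
  rcases hc _ _ hsup.symm hinf with h | h
  · right
    have hEu : E = univ := by rw [hEc, h]; exact Ici_bot
    refine eq_O (fun x hx => hEF ⟨?_, hx⟩) (top_mem hF)
    rw [hEu]; trivial
  · left
    have hFu : F = univ := by rw [hFc, h]; exact Ici_bot
    refine eq_O (fun x hx => hEF ⟨hx, ?_⟩) (top_mem hE)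
    rw [hFu]; trivial

lemma inf_mem' (h : IsSublocale S) (hx : x ∈ S) (hy : b ∈ S) : x ⊓ b ∈ S := by
  have := h.1 {x, b} (by rintro z (rfl | hz); exact hx; simpa using hz ▸ hy)
  simpa [sInf_pair] using this

/-- Core separation step: if `A, B` separate the complement of the connected `U`,
then `U ∨ B` cannot be separated on the `B` side. -/
lemma lemK_core {U A B : Set L} (hc : ConnElem (⊤ : L)) (hUs : IsSublocale U)
    (hA : IsSublocale A) (hB : IsSublocale B)
    (hUne : U ≠ ({⊤} : Set L))
    (sep1 : clo A ∩ B = ({⊤} : Set L)) (sep2 : A ∩ clo B = ({⊤} : Set L))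
    (hclUB : clo U ∩ B = ({⊤} : Set L))
    (htot : vee (vee A B) U = (univ : Set L))
    {e f : L} (h1 : vee U B ⊆ Ici (e ⊓ f)) (h2 : vee U B ∩ Ici (e ⊔ f) = ({⊤} : Set L))
    (hUf : U ∩ Ici f = ({⊤} : Set L)) : vee U B ∩ Ici f = ({⊤} : Set L) := by
  set K := vee U B with hK
  have hKs : IsSublocale K := isSub_vee hUs hB
  have hUK : U ⊆ K := subset_vee_left
  have hUe : U ⊆ Ici e := by
    refine L1 hUs ?_ hUf
    rw [inf_comm f e]
    exact hUK.trans h1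
  have hEdef : K ∩ Ici e = vee U (B ∩ Ici e) := by
    rw [inter_comm, distS isSub_Ici hUs hB, inter_comm (Ici e) U, inter_eq_left.2 hUe,
      inter_comm (Ici e) B]
  have hFdef : K ∩ Ici f = B ∩ Ici f := by
    rw [inter_comm, distS isSub_Ici hUs hB, inter_comm (Ici f) U, hUf,
      inter_comm (Ici f) B, O_vee (isSub_inter hB isSub_Ici)]
  set E := K ∩ Ici e with hE
  set F := K ∩ Ici f with hF
  have hEs : IsSublocale E := isSub_inter hKs isSub_Ici
  have hFs : IsSublocale F := isSub_inter hKs isSub_Ici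
  have hKEF : K = vee E F := by
    have h0 : K = K ∩ vee (cSub e) (cSub f) := by
      rw [veeCC]; exact (inter_eq_left.2 h1).symm
    rw [h0, distS hKs isSub_cSub isSub_cSub]
    rfl
  have hEFO : ∀ x ∈ E, x ∈ Ici f → x = ⊤ := by
    intro x hx hxf
    have hm : x ∈ K ∩ Ici (e ⊔ f) := ⟨hx.1, sup_le hx.2 hxf⟩
    rw [h2] at hm; exact hm
  have hFB : F ⊆ B := fun x hx => (hFdef ▸ hx).1
  have htot2 : vee (vee E A) F = (univ : Set L) := by
    have a1 : vee (vee A B) U = vee A K := by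
      rw [vee_assoc hA hB hUs, show vee B U = K from vee_comm]
    have a2 : vee A K = vee (vee E A) F := by
      rw [hKEF, ← vee_assoc hA hEs hFs, show vee A E = vee E A from vee_comm]
    rw [← a2, ← a1, htot]
  have hcloFIci : clo F ⊆ Ici f := clo_subset_Ici (fun x hx => hx.2)
  have hcloFB : clo F ⊆ clo B := clo_mono hFB
  have s2 : vee E A ∩ clo F = ({⊤} : Set L) := by
    refine eq_O (fun x hx => ?_) ⟨top_mem (isSub_vee hEs hA), top_mem isSub_clo⟩
    obtain ⟨hx1, hx2⟩ := hx
    have hx' : x ∈ vee (clo F ∩ E) (clo F ∩ A) := by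
      rw [← distS isSub_clo hEs hA]; exact ⟨hx2, hx1⟩
    have c1 : clo F ∩ E ⊆ ({⊤} : Set L) := fun y hy => by
      rw [mem_singleton_iff]; exact hEFO y hy.2 (hcloFIci hy.1)
    have c2 : clo F ∩ A ⊆ ({⊤} : Set L) := fun y hy => by
      rw [mem_singleton_iff]
      have hm : y ∈ A ∩ clo B := ⟨hy.2, hcloFB hy.1⟩
      rw [sep2] at hm; exact hm
    have := vee_mono c1 c2 hx'
    rwa [vee_O isSub_O] at this
  have s1 : clo (vee E A) ∩ F = ({⊤} : Set L) := by
    refine eq_O (fun x hx => ?_) ⟨top_mem isSub_clo, top_mem hFs⟩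
    obtain ⟨hx1, hx2⟩ := hx
    rw [clo_vee hEs hA] at hx1
    have hx1' : x ∈ vee (F ∩ clo E) (F ∩ clo A) := by
      rw [← distS hFs isSub_clo isSub_clo]; exact ⟨hx2, hx1⟩
    have c2 : F ∩ clo A ⊆ ({⊤} : Set L) := fun y hy => by
      rw [mem_singleton_iff]
      have hm : y ∈ clo A ∩ B := ⟨hy.2, hFB hy.1⟩
      rw [sep1] at hm; exact hm
    have c1 : F ∩ clo E ⊆ ({⊤} : Set L) := by
      intro y hy
      rw [mem_singleton_iff]
      obtain ⟨hy1, hy2⟩ := hy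
      rw [hEdef, clo_vee hUs (isSub_inter hB isSub_Ici)] at hy2
      have hy2' : y ∈ vee (F ∩ clo U) (F ∩ clo (B ∩ Ici e)) := by
        rw [← distS hFs isSub_clo isSub_clo]; exact ⟨hy1, hy2⟩
      have d1 : F ∩ clo U ⊆ ({⊤} : Set L) := fun z hz => by
        rw [mem_singleton_iff]
        have hm : z ∈ clo U ∩ B := ⟨hz.2, hFB hz.1⟩
        rw [hclUB] at hm; exact hm
      have d2 : F ∩ clo (B ∩ Ici e) ⊆ ({⊤} : Set L) := fun z hz => by
        rw [mem_singleton_iff]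
        have hze : e ≤ z := clo_subset_Ici (fun w hw => hw.2) hz.2
        have hm : z ∈ K ∩ Ici (e ⊔ f) := ⟨hz.1.1, sup_le hze hz.1.2⟩
        rw [h2] at hm; exact hm
      have := vee_mono d1 d2 hy2'
      rwa [vee_O isSub_O, mem_singleton_iff] at this
    have := vee_mono c1 c2 hx1'
    rwa [vee_O isSub_O] at this
  rcases connX hc (isSub_vee hEs hA) hFs htot2 s1 s2 with hcase | hcase
  · exfalso
    apply hUne
    refine eq_O (fun x hx => ?_) (top_mem hUs)
    rw [← hcase]
    exact subset_vee_left (⟨hUK hx, hUe hx⟩ : x ∈ E)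
  · exact hcase

/-- If `A, B` separate the supplement of the connected `U`, then `U ∨ B` is connected. -/
lemma lemK {U A B : Set L} (hc : ConnElem (⊤ : L)) (hUs : IsSublocale U)
    (hA : IsSublocale A) (hB : IsSublocale B) (hUc : SubConnected U)
    (hUne : U ≠ ({⊤} : Set L))
    (sep1 : clo A ∩ B = ({⊤} : Set L)) (sep2 : A ∩ clo B = ({⊤} : Set L))
    (hclUB : clo U ∩ B = ({⊤} : Set L))
    (htot : vee (vee A B) U = (univ : Set L)) : SubConnected (vee U B) := by
  rw [subConn_iff]
  intro e f h1 h2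
  have hUsub : U ⊆ Ici (e ⊓ f) := subset_vee_left.trans h1
  have hUO : U ∩ Ici (e ⊔ f) = ({⊤} : Set L) :=
    eq_O (fun x hx => by rw [← h2]; exact ⟨subset_vee_left hx.1, hx.2⟩) ⟨top_mem hUs, le_top⟩
  have hUc' := (subConn_iff).1 hUc
  rcases hUc' e f hUsub hUO with hcase | hcase
  · left
    refine lemK_core (e := f) (f := e) hc hUs hA hB hUne sep1 sep2 hclUB htot ?_ ?_ hcase
    · rw [inf_comm f e]; exact h1
    · rw [sup_comm f e]; exact h2
  · exact Or.inr (lemK_core hc hUs hA hB hUne sep1 sep2 hclUB htot h1 h2 hcase)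

end Scratch

open Scratch in
theorem stmt17 (hc : ConnElem (⊤ : L)) (u : L) (hu : u ≠ ⊤)
    (hconn : SubConnected (cSub u)) (U : Set L) (hU : IsComponent U (oSub u)) :
    SimpleSub U := by
  obtain ⟨hUs, hUV, hUne, hUc, hUmax⟩ := hU
  have htopU : ⊤ ∈ U := top_mem hUs
  set a := sInf U with ha
  -- Step 1 : U = Ici a ∩ oSub u
  have hsub1 : U ⊆ Ici a ∩ oSub u := fun x hx => ⟨sInf_le hx, hUV hx⟩
  have hstep1 : U = Ici a ∩ oSub u := by
    apply Subset.antisymm hsub1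
    refine hUmax _ (isSub_inter isSub_Ici isSub_oSub) inter_subset_right ?_ ?_
    · exact sandwich hUs hUc ⟨le_top, himp_top⟩ hsub1 (fun x hx => hx.1)
    · intro hM
      apply hUne
      refine eq_O (fun x hx => ?_) htopU
      rw [← hM]; exact ⟨hsub1 hx, hx⟩
  -- the supplement candidate W
  set W := vee (oSub a) (cSub u) with hWdef
  have hWs : IsSublocale W := isSub_vee isSub_oSub isSub_cSub
  have hCW : cSub u ⊆ W := subset_vee_right
  have htopW : ⊤ ∈ W := top_mem hWs
  -- Step 2 : Ici a ⊆ U ∨ (Ici a ∩ cSub u)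
  have hstep2 : (Ici a : Set L) ⊆ vee U (Ici a ∩ cSub u) := by
    intro x hx
    rw [mem_vee_iff hUs (isSub_inter isSub_Ici isSub_cSub)]
    refine ⟨u ⇨ x, ?_, u ⊔ x, ⟨le_trans hx le_sup_right, le_sup_left⟩, decomp u x⟩
    rw [hstep1]
    refine ⟨le_himp_iff.2 ((inf_le_left : a ⊓ u ≤ a).trans hx), ?_⟩
    show u ⇨ (u ⇨ x) = u ⇨ x
    rw [himp_himp, inf_idem]
  -- Step 3 : vee W U = univ
  have hstep3 : vee W U = (univ : Set L) := by
    apply eq_univ_of_forall; intro x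
    rw [mem_vee_iff hWs hUs]
    have h4 : (a ⊔ x) ∈ vee U (Ici a ∩ cSub u) := hstep2 le_sup_left
    rw [mem_vee_iff hUs (isSub_inter isSub_Ici isSub_cSub)] at h4
    obtain ⟨y, hy, z, hz, hyz⟩ := h4
    have m1 : (a ⇨ x) ∈ W :=
      subset_vee_left (show a ⇨ (a ⇨ x) = a ⇨ x by rw [himp_himp, inf_idem])
    refine ⟨(a ⇨ x) ⊓ z, inf_mem' hWs m1 (hCW hz.2), y, hy, ?_⟩
    calc x = (a ⇨ x) ⊓ (a ⊔ x) := decomp a x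
    _ = (a ⇨ x) ⊓ (y ⊓ z) := by rw [hyz]
    _ = (a ⇨ x) ⊓ z ⊓ y := by rw [inf_comm y z, inf_assoc]
  -- U and W are disjoint
  have hUW : U ∩ W = ({⊤} : Set L) := by
    refine eq_O (fun x hx => ?_) ⟨htopU, htopW⟩
    rw [mem_singleton_iff]
    obtain ⟨hxU, hxW⟩ := hx
    rw [mem_vee_iff isSub_oSub isSub_cSub] at hxW
    obtain ⟨p, hp, q, hq, hpq⟩ := hxW
    have hap : a ≤ p := (sInf_le hxU).trans (hpq ▸ inf_le_left)
    have hp_top : p = ⊤ := top_of_oSub_Ici hp hap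
    have hxq : x = q := by rw [hpq, hp_top, top_inf_eq]
    rw [hxq]
    exact top_of_oSub_Ici (hUV (hxq ▸ hxU)) hq
  -- suppl U = W
  have hsupplW : suppl U = W := by
    apply Subset.antisymm
    · exact sInter_subset_of_mem ⟨hWs, hstep3⟩
    · intro x hx
      rw [suppl, mem_sInter]
      rintro T ⟨hTs, hTtot⟩
      have h5 : W ⊆ vee (W ∩ T) (W ∩ U) := by
        rw [← distS hWs hTs hUs, hTtot, inter_univ]
      have h6 : W ∩ U ⊆ ({⊤} : Set L) := fun y hy => by
        rw [mem_singleton_iff]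
        have hm : y ∈ U ∩ W := ⟨hy.2, hy.1⟩
        rw [hUW] at hm; exact hm
      have h7 := vee_mono (le_refl (W ∩ T)) h6 (h5 hx)
      rw [vee_O (isSub_inter hWs hTs)] at h7
      exact h7.2
  have hcomp : ComplementedSub U := by
    unfold ComplementedSub
    rw [hsupplW]
    exact hUW
  -- Connectedness of W
  have hWconn : SubConnected W := by
    rw [subConn_iff]
    intro b c hbc hO
    have hCconn := (subConn_iff).1 hconn
    have hCsub : cSub u ⊆ Ici (b ⊓ c) := hCW.trans hbc
    have hCO : cSub u ∩ Ici (b ⊔ c) = ({⊤} : Set L) :=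
      eq_O (fun x hx => by rw [← hO]; exact ⟨hCW hx.1, hx.2⟩) ⟨le_top, le_top⟩
    have key : ∀ b c : L, W ⊆ Ici (b ⊓ c) → W ∩ Ici (b ⊔ c) = ({⊤} : Set L) →
        cSub u ⊆ Ici b → W ∩ Ici c = ({⊤} : Set L) := by
      clear hbc hO hCsub hCO
      intro b c hbc hO hCb
      set A := W ∩ Ici b with hAdef
      set B := W ∩ Ici c with hBdef
      have hAs : IsSublocale A := isSub_inter hWs isSub_Ici
      have hBs : IsSublocale B := isSub_inter hWs isSub_Ici
      have hABO : ∀ x, x ∈ W → b ≤ x → c ≤ x → x = ⊤ := fun x hw h2 h3 => by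
        have hm : x ∈ W ∩ Ici (b ⊔ c) := ⟨hw, sup_le h2 h3⟩
        rw [hO] at hm; exact hm
      have sep1 : clo A ∩ B = ({⊤} : Set L) := by
        refine eq_O (fun x hx => ?_) ⟨top_mem isSub_clo, top_mem hBs⟩
        rw [mem_singleton_iff]
        exact hABO x hx.2.1 (clo_subset_Ici (fun y hy => hy.2) hx.1) hx.2.2
      have sep2 : A ∩ clo B = ({⊤} : Set L) := by
        refine eq_O (fun x hx => ?_) ⟨top_mem hAs, top_mem isSub_clo⟩
        rw [mem_singleton_iff]
        exact hABO x hx.1.1 hx.1.2 (clo_subset_Ici (fun y hy => hy.2) hx.2)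
      have hclUA : (Ici a : Set L) ⊆ vee U A :=
        hstep2.trans (vee_mono (le_refl U) (fun z hz => ⟨hCW hz.2, hCb hz.2⟩))
      have hclUB : clo U ∩ B = ({⊤} : Set L) := by
        refine eq_O (fun x hx => ?_) ⟨top_mem isSub_clo, top_mem hBs⟩
        obtain ⟨hx1, hx2⟩ := hx
        have hx1' : x ∈ vee U A := hclUA hx1
        have hx3 : x ∈ vee (B ∩ U) (B ∩ A) := by
          rw [← distS hBs hUs hAs]; exact ⟨hx2, hx1'⟩
        have c1 : B ∩ U ⊆ ({⊤} : Set L) := fun y hy => by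
          rw [mem_singleton_iff]
          have hm : y ∈ U ∩ W := ⟨hy.2, hy.1.1⟩
          rw [hUW] at hm; exact hm
        have c2 : B ∩ A ⊆ ({⊤} : Set L) := fun y hy => by
          rw [mem_singleton_iff]
          exact hABO y hy.1.1 hy.2.2 hy.1.2
        have := vee_mono c1 c2 hx3
        rwa [vee_O isSub_O] at this
      have hAB : vee A B = W := by
        calc vee A B = W ∩ vee (cSub b) (cSub c) := (distS hWs isSub_cSub isSub_cSub).symm
        _ = W := inter_eq_left.2 (by rw [veeCC]; exact hbc)
      have htotK : vee (vee A B) U = (univ : Set L) := by rw [hAB, hstep3]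
      have hBV : B ⊆ oSub u := by
        intro x hx
        have hx' : x ∈ vee (B ∩ oSub u) (B ∩ cSub u) := by
          rw [← distS hBs isSub_oSub isSub_cSub, o_vee_c, inter_univ]; exact hx
        have c2 : B ∩ cSub u ⊆ ({⊤} : Set L) := fun y hy => by
          rw [mem_singleton_iff]; exact hABO y hy.1.1 (hCb hy.2) hy.1.2
        have := vee_mono (le_refl (B ∩ oSub u)) c2 hx'
        rw [vee_O (isSub_inter hBs isSub_oSub)] at this
        exact this.2
      have hKconn : SubConnected (vee U B) :=
        lemK hc hUs hAs hBs hUc hUne sep1 sep2 hclUB htotK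
      have hKV : vee U B ⊆ oSub u := vee_subset isSub_oSub hUV hBV
      have hMeets : Meets (vee U B) U := by
        intro hM
        apply hUne
        refine eq_O (fun x hx => ?_) htopU
        rw [← hM]; exact ⟨subset_vee_left hx, hx⟩
      have hBU : B ⊆ U :=
        (subset_vee_right (A := U)).trans
          (hUmax _ (isSub_vee hUs hBs) hKV hKconn hMeets)
      refine eq_O (fun x hx => ?_) ⟨htopW, le_top⟩
      rw [mem_singleton_iff]
      have hm : x ∈ U ∩ W := ⟨hBU hx, hx.1⟩
      rw [hUW] at hm; exact hm
    rcases hCconn b c hCsub hCO with hb | hcc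
    · left
      have hCc : cSub u ⊆ Ici c := L1 isSub_cSub hCsub hb
      refine key c b ?_ ?_ hCc
      · rw [inf_comm c b]; exact hbc
      · rw [sup_comm c b]; exact hO
    · exact Or.inr (key b c hbc hO
        (L1 isSub_cSub (by rw [inf_comm c b]; exact hCsub) hcc))
  refine ⟨hUs, hcomp, hUc, ?_⟩
  rw [hsupplW]
  exact hWconn
end
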